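/- arXiv:0903.2106 — 2 statements merged into one kernel-verified Lean document; each statement's English description precedes it below -/
import Mathlib

section
/- Fix Pr > 0, R > 0, δ₀′, δ₁′ ∈ ℝ, r₀ > 0 and τ > 0. Let (u,T,p) be smooth on M × [0,τ], with u(·,t), T(·,t), p(·,t) 2πr₀-periodic in x₁, u divergence-free, and satisfying the boundary conditions u₂ = 0, ∂u₁/∂x₂ = 0, T = 0 at x₂ = r₀ and x₂ = r₀+1, and solving: ∂u₁/∂t + (u·∇)u₁ + u₁u₂/r₀ = Pr[Δu₁ − δ₀′u₁ − ∂p/∂x₁], ∂u₂/∂t + (u·∇)u₂ − u₁²/r₀ = Pr[Δu₂ − δ₁′u₂ + RT − ∂p/∂x₂], ∂T/∂t + (u·∇)T = ΔT + u₂. Then for every t ∈ (0,τ): (d/dt) [ ½∫_M (u₁² + u₂² + Pr·R·T²) dx ] = −Pr[ ∫_M |∇u|² dx + δ₀′∫_M u₁² dx + δ₁′∫_M u₂² dx + R∫_M |∇T|² dx ] + 2 Pr R ∫_M u₂ T dx, where |∇u|² = Σ_{i,j} (∂u_j/∂x_i)². -/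
open MeasureTheory Set

/-- Partial derivative in the first (zonal) variable. -/
noncomputable def pdx (f : ℝ × ℝ → ℝ) (p : ℝ × ℝ) : ℝ := deriv (fun s => f (s, p.2)) p.1

/-- Partial derivative in the second (vertical) variable. -/
noncomputable def pdy (f : ℝ × ℝ → ℝ) (p : ℝ × ℝ) : ℝ := deriv (fun s => f (p.1, s)) p.2

/-- Laplacian `Δ = ∂²/∂x₁² + ∂²/∂x₂²`. -/
noncomputable def lap (f : ℝ × ℝ → ℝ) (p : ℝ × ℝ) : ℝ := pdx (pdx f) p + pdy (pdy f) p

/-- Advection `(u·∇)f = u₁ ∂f/∂x₁ + u₂ ∂f/∂x₂`. -/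
noncomputable def adv (a b f : ℝ × ℝ → ℝ) (p : ℝ × ℝ) : ℝ := a p * pdx f p + b p * pdy f p

/-- The strip `M = ℝ × [r₀, r₀+1]`. -/
def strip (r₀ : ℝ) : Set (ℝ × ℝ) := Set.univ ×ˢ Set.Icc r₀ (r₀ + 1)

/-- The period cell `[0, 2πr₀] × [r₀, r₀+1]`. -/
def cell (r₀ : ℝ) : Set (ℝ × ℝ) := Set.Icc 0 (2 * Real.pi * r₀) ×ˢ Set.Icc r₀ (r₀ + 1)

/-- `2πr₀`-periodicity in the first variable. -/
def Per (r₀ : ℝ) (f : ℝ × ℝ → ℝ) : Prop :=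
  ∀ p : ℝ × ℝ, f (p.1 + 2 * Real.pi * r₀, p.2) = f p

namespace EnergyAux

lemma diff_slice_x {f : ℝ × ℝ → ℝ} (hf : Differentiable ℝ f) (y : ℝ) :
    Differentiable ℝ (fun s => f (s, y)) :=
  hf.comp (differentiable_id.prodMk (differentiable_const y))

lemma diff_slice_y {f : ℝ × ℝ → ℝ} (hf : Differentiable ℝ f) (x : ℝ) :
    Differentiable ℝ (fun s => f (x, s)) :=
  hf.comp ((differentiable_const x).prodMk differentiable_id)

lemma hasDerivAt_pdx {f : ℝ × ℝ → ℝ} (hf : Differentiable ℝ f) (p : ℝ × ℝ) :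
    HasDerivAt (fun s => f (s, p.2)) (pdx f p) p.1 :=
  ((diff_slice_x hf p.2) p.1).hasDerivAt

lemma hasDerivAt_pdy {f : ℝ × ℝ → ℝ} (hf : Differentiable ℝ f) (p : ℝ × ℝ) :
    HasDerivAt (fun s => f (p.1, s)) (pdy f p) p.2 :=
  ((diff_slice_y hf p.1) p.2).hasDerivAt

lemma pdx_eq_fderiv {f : ℝ × ℝ → ℝ} (hf : Differentiable ℝ f) (p : ℝ × ℝ) :
    pdx f p = fderiv ℝ f p (1, 0) := by
  have h : HasDerivAt (fun s => f (s, p.2)) (fderiv ℝ f p ((1 : ℝ), (0 : ℝ))) p.1 := by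
    have := (hf (p.1, p.2)).hasFDerivAt.comp_hasDerivAt p.1
      ((hasDerivAt_id p.1).prodMk (hasDerivAt_const p.1 p.2))
    exact this
  exact h.deriv

lemma pdy_eq_fderiv {f : ℝ × ℝ → ℝ} (hf : Differentiable ℝ f) (p : ℝ × ℝ) :
    pdy f p = fderiv ℝ f p (0, 1) := by
  have h : HasDerivAt (fun s => f (p.1, s)) (fderiv ℝ f p ((0 : ℝ), (1 : ℝ))) p.2 := by
    have := (hf (p.1, p.2)).hasFDerivAt.comp_hasDerivAt p.2
      ((hasDerivAt_const p.2 p.1).prodMk (hasDerivAt_id p.2))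
    exact this
  exact h.deriv

lemma contDiff_pdx {f : ℝ × ℝ → ℝ} (hf : ContDiff ℝ (⊤ : ℕ∞) f) : ContDiff ℝ (⊤ : ℕ∞) (pdx f) := by
  have h : pdx f = fun p => fderiv ℝ f p (1, 0) :=
    funext fun p => pdx_eq_fderiv (hf.differentiable (by simp)) p
  rw [h]
  exact (hf.fderiv_right (by simp)).clm_apply contDiff_const

lemma contDiff_pdy {f : ℝ × ℝ → ℝ} (hf : ContDiff ℝ (⊤ : ℕ∞) f) : ContDiff ℝ (⊤ : ℕ∞) (pdy f) := by
  have h : pdy f = fun p => fderiv ℝ f p (0, 1) :=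
    funext fun p => pdy_eq_fderiv (hf.differentiable (by simp)) p
  rw [h]
  exact (hf.fderiv_right (by simp)).clm_apply contDiff_const

lemma per_pdx {r₀ : ℝ} {f : ℝ × ℝ → ℝ} (hf : Per r₀ f) : Per r₀ (pdx f) := by
  intro p
  show deriv (fun s => f (s, p.2)) (p.1 + 2 * Real.pi * r₀) = deriv (fun s => f (s, p.2)) p.1
  have h2 := deriv_comp_add_const (fun s => f (s, p.2)) (2 * Real.pi * r₀) p.1
  rw [← h2]
  congr 1
  funext s
  exact hf (s, p.2)

lemma isCompact_cell (r₀ : ℝ) : IsCompact (cell r₀) := isCompact_Icc.prod isCompact_Icc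

lemma measurableSet_cell (r₀ : ℝ) : MeasurableSet (cell r₀) :=
  (measurableSet_Icc.prod measurableSet_Icc)

lemma cell_subset_strip (r₀ : ℝ) : cell r₀ ⊆ strip r₀ := fun p hp => ⟨trivial, hp.2⟩

lemma integrableOn_cell {r₀ : ℝ} {f : ℝ × ℝ → ℝ} (hf : Continuous f) :
    IntegrableOn f (cell r₀) := hf.continuousOn.integrableOn_compact (isCompact_cell r₀)

lemma cell_integral_eq {r₀ : ℝ} (hr₀ : 0 < r₀) (f : ℝ × ℝ → ℝ) (hf : Continuous f) :
    ∫ p in cell r₀, f p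
      = ∫ x in (0:ℝ)..(2 * Real.pi * r₀), ∫ y in r₀..(r₀ + 1), f (x, y) := by
  have hL : (0:ℝ) ≤ 2 * Real.pi * r₀ := by positivity
  have h1 : ∫ p in cell r₀, f p
      = ∫ x in Icc (0:ℝ) (2 * Real.pi * r₀), ∫ y in Icc r₀ (r₀ + 1), f (x, y) := by
    rw [cell, MeasureTheory.Measure.volume_eq_prod]
    exact MeasureTheory.setIntegral_prod f
      (by rw [← MeasureTheory.Measure.volume_eq_prod]; exact integrableOn_cell hf)
  rw [h1]
  rw [intervalIntegral.integral_of_le hL, ← MeasureTheory.integral_Icc_eq_integral_Ioc]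
  refine MeasureTheory.setIntegral_congr_fun measurableSet_Icc (fun x _ => ?_)
  rw [intervalIntegral.integral_of_le (by linarith : r₀ ≤ r₀ + 1),
    ← MeasureTheory.integral_Icc_eq_integral_Ioc]

end EnergyAux

namespace EnergyAux

/-- flux in the x-direction -/
noncomputable def bA (Pr R : ℝ) (v₁ v₂ θ q : ℝ × ℝ → ℝ) : ℝ × ℝ → ℝ := fun p =>
  Pr * (v₁ p * pdx v₁ p + v₂ p * pdx v₂ p + R * (θ p * pdx θ p))
    - v₁ p * ((1/2) * ((v₁ p)^2 + (v₂ p)^2 + Pr * R * (θ p)^2)) - Pr * (v₁ p * q p)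

/-- flux in the y-direction -/
noncomputable def bB (Pr R : ℝ) (v₁ v₂ θ q : ℝ × ℝ → ℝ) : ℝ × ℝ → ℝ := fun p =>
  Pr * (v₁ p * pdy v₁ p + v₂ p * pdy v₂ p + R * (θ p * pdy θ p))
    - v₂ p * ((1/2) * ((v₁ p)^2 + (v₂ p)^2 + Pr * R * (θ p)^2)) - Pr * (v₂ p * q p)

variable {Pr R : ℝ} {v₁ v₂ θ q : ℝ × ℝ → ℝ}

lemma contDiff_bA (h₁ : ContDiff ℝ (⊤ : ℕ∞) v₁) (h₂ : ContDiff ℝ (⊤ : ℕ∞) v₂) (h₃ : ContDiff ℝ (⊤ : ℕ∞) θ)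
    (h₄ : ContDiff ℝ (⊤ : ℕ∞) q) : ContDiff ℝ (⊤ : ℕ∞) (bA Pr R v₁ v₂ θ q) := by
  have h₁x := contDiff_pdx h₁
  have h₂x := contDiff_pdx h₂
  have h₃x := contDiff_pdx h₃
  unfold bA
  fun_prop

lemma contDiff_bB (h₁ : ContDiff ℝ (⊤ : ℕ∞) v₁) (h₂ : ContDiff ℝ (⊤ : ℕ∞) v₂) (h₃ : ContDiff ℝ (⊤ : ℕ∞) θ)
    (h₄ : ContDiff ℝ (⊤ : ℕ∞) q) : ContDiff ℝ (⊤ : ℕ∞) (bB Pr R v₁ v₂ θ q) := by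
  have h₁y := contDiff_pdy h₁
  have h₂y := contDiff_pdy h₂
  have h₃y := contDiff_pdy h₃
  unfold bB
  fun_prop

lemma per_bA {r₀ : ℝ} (p₁ : Per r₀ v₁) (p₂ : Per r₀ v₂) (p₃ : Per r₀ θ) (p₄ : Per r₀ q) :
    Per r₀ (bA Pr R v₁ v₂ θ q) := by
  intro p
  unfold bA
  rw [p₁ p, p₂ p, p₃ p, p₄ p, per_pdx p₁ p, per_pdx p₂ p, per_pdx p₃ p]

lemma bB_bc {p : ℝ × ℝ} (h₁ : pdy v₁ p = 0) (h₂ : v₂ p = 0) (h₃ : θ p = 0) :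
    bB Pr R v₁ v₂ θ q p = 0 := by
  unfold bB
  rw [h₁, h₂, h₃]
  ring

lemma pdx_bA (h₁ : ContDiff ℝ (⊤ : ℕ∞) v₁) (h₂ : ContDiff ℝ (⊤ : ℕ∞) v₂) (h₃ : ContDiff ℝ (⊤ : ℕ∞) θ)
    (h₄ : ContDiff ℝ (⊤ : ℕ∞) q) (p : ℝ × ℝ) :
    pdx (bA Pr R v₁ v₂ θ q) p =
      Pr * ((pdx v₁ p * pdx v₁ p + v₁ p * pdx (pdx v₁) p)
          + (pdx v₂ p * pdx v₂ p + v₂ p * pdx (pdx v₂) p)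
          + R * (pdx θ p * pdx θ p + θ p * pdx (pdx θ) p))
      - (pdx v₁ p * ((1/2) * ((v₁ p)^2 + (v₂ p)^2 + Pr * R * (θ p)^2))
          + v₁ p * ((1/2) * ((2 * v₁ p * pdx v₁ p) + (2 * v₂ p * pdx v₂ p)
              + Pr * R * (2 * θ p * pdx θ p))))
      - Pr * (pdx v₁ p * q p + v₁ p * pdx q p) := by
  have d₁ := hasDerivAt_pdx (h₁.differentiable (by simp)) p
  have d₂ := hasDerivAt_pdx (h₂.differentiable (by simp)) p
  have d₃ := hasDerivAt_pdx (h₃.differentiable (by simp)) p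
  have d₄ := hasDerivAt_pdx (h₄.differentiable (by simp)) p
  have d₁x := hasDerivAt_pdx ((contDiff_pdx h₁).differentiable (by simp)) p
  have d₂x := hasDerivAt_pdx ((contDiff_pdx h₂).differentiable (by simp)) p
  have d₃x := hasDerivAt_pdx ((contDiff_pdx h₃).differentiable (by simp)) p
  have hK : HasDerivAt
      (fun s => (1/2 : ℝ) * ((v₁ (s, p.2))^2 + (v₂ (s, p.2))^2 + Pr * R * (θ (s, p.2))^2))
      ((1/2) * ((2 * v₁ p * pdx v₁ p) + (2 * v₂ p * pdx v₂ p)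
        + Pr * R * (2 * θ p * pdx θ p))) p.1 := by
    have h := ((((d₁.pow 2).add (d₂.pow 2)).add ((d₃.pow 2).const_mul (Pr * R))).const_mul
      (1/2 : ℝ))
    exact h.congr_deriv (by push_cast; ring)
  have H : HasDerivAt (fun s => bA Pr R v₁ v₂ θ q (s, p.2))
      (Pr * ((pdx v₁ p * pdx v₁ p + v₁ p * pdx (pdx v₁) p)
          + (pdx v₂ p * pdx v₂ p + v₂ p * pdx (pdx v₂) p)
          + R * (pdx θ p * pdx θ p + θ p * pdx (pdx θ) p))
      - (pdx v₁ p * ((1/2) * ((v₁ p)^2 + (v₂ p)^2 + Pr * R * (θ p)^2))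
          + v₁ p * ((1/2) * ((2 * v₁ p * pdx v₁ p) + (2 * v₂ p * pdx v₂ p)
              + Pr * R * (2 * θ p * pdx θ p))))
      - Pr * (pdx v₁ p * q p + v₁ p * pdx q p)) p.1 := by
    exact ((((d₁.mul d₁x).add (d₂.mul d₂x)).add ((d₃.mul d₃x).const_mul R)).const_mul Pr).sub
      (d₁.mul hK) |>.sub ((d₁.mul d₄).const_mul Pr)
  exact H.deriv

lemma pdy_bB (h₁ : ContDiff ℝ (⊤ : ℕ∞) v₁) (h₂ : ContDiff ℝ (⊤ : ℕ∞) v₂) (h₃ : ContDiff ℝ (⊤ : ℕ∞) θ)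
    (h₄ : ContDiff ℝ (⊤ : ℕ∞) q) (p : ℝ × ℝ) :
    pdy (bB Pr R v₁ v₂ θ q) p =
      Pr * ((pdy v₁ p * pdy v₁ p + v₁ p * pdy (pdy v₁) p)
          + (pdy v₂ p * pdy v₂ p + v₂ p * pdy (pdy v₂) p)
          + R * (pdy θ p * pdy θ p + θ p * pdy (pdy θ) p))
      - (pdy v₂ p * ((1/2) * ((v₁ p)^2 + (v₂ p)^2 + Pr * R * (θ p)^2))
          + v₂ p * ((1/2) * ((2 * v₁ p * pdy v₁ p) + (2 * v₂ p * pdy v₂ p)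
              + Pr * R * (2 * θ p * pdy θ p))))
      - Pr * (pdy v₂ p * q p + v₂ p * pdy q p) := by
  have d₁ := hasDerivAt_pdy (h₁.differentiable (by simp)) p
  have d₂ := hasDerivAt_pdy (h₂.differentiable (by simp)) p
  have d₃ := hasDerivAt_pdy (h₃.differentiable (by simp)) p
  have d₄ := hasDerivAt_pdy (h₄.differentiable (by simp)) p
  have d₁y := hasDerivAt_pdy ((contDiff_pdy h₁).differentiable (by simp)) p
  have d₂y := hasDerivAt_pdy ((contDiff_pdy h₂).differentiable (by simp)) p
  have d₃y := hasDerivAt_pdy ((contDiff_pdy h₃).differentiable (by simp)) p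
  have hK : HasDerivAt
      (fun s => (1/2 : ℝ) * ((v₁ (p.1, s))^2 + (v₂ (p.1, s))^2 + Pr * R * (θ (p.1, s))^2))
      ((1/2) * ((2 * v₁ p * pdy v₁ p) + (2 * v₂ p * pdy v₂ p)
        + Pr * R * (2 * θ p * pdy θ p))) p.2 := by
    have h := ((((d₁.pow 2).add (d₂.pow 2)).add ((d₃.pow 2).const_mul (Pr * R))).const_mul
      (1/2 : ℝ))
    exact h.congr_deriv (by push_cast; ring)
  have H : HasDerivAt (fun s => bB Pr R v₁ v₂ θ q (p.1, s))
      (Pr * ((pdy v₁ p * pdy v₁ p + v₁ p * pdy (pdy v₁) p)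
          + (pdy v₂ p * pdy v₂ p + v₂ p * pdy (pdy v₂) p)
          + R * (pdy θ p * pdy θ p + θ p * pdy (pdy θ) p))
      - (pdy v₂ p * ((1/2) * ((v₁ p)^2 + (v₂ p)^2 + Pr * R * (θ p)^2))
          + v₂ p * ((1/2) * ((2 * v₁ p * pdy v₁ p) + (2 * v₂ p * pdy v₂ p)
              + Pr * R * (2 * θ p * pdy θ p))))
      - Pr * (pdy v₂ p * q p + v₂ p * pdy q p)) p.2 := by
    exact ((((d₁.mul d₁y).add (d₂.mul d₂y)).add ((d₃.mul d₃y).const_mul R)).const_mul Pr).sub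
      (d₂.mul hK) |>.sub ((d₂.mul d₄).const_mul Pr)
  exact H.deriv

lemma pointwise (Pr R δ₀' δ₁' r₀ : ℝ) (v₁ v₂ θ q : ℝ × ℝ → ℝ) (w₁ w₂ w₃ : ℝ)
    (h₁ : ContDiff ℝ (⊤ : ℕ∞) v₁) (h₂ : ContDiff ℝ (⊤ : ℕ∞) v₂) (h₃ : ContDiff ℝ (⊤ : ℕ∞) θ)
    (h₄ : ContDiff ℝ (⊤ : ℕ∞) q) (p : ℝ × ℝ)
    (hdiv : pdx v₁ p + pdy v₂ p = 0)
    (e₁ : w₁ + adv v₁ v₂ v₁ p + v₁ p * v₂ p / r₀ = Pr * (lap v₁ p - δ₀' * v₁ p - pdx q p))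
    (e₂ : w₂ + adv v₁ v₂ v₂ p - (v₁ p)^2 / r₀
        = Pr * (lap v₂ p - δ₁' * v₂ p + R * θ p - pdy q p))
    (e₃ : w₃ + adv v₁ v₂ θ p = lap θ p + v₂ p) :
    2 * (v₁ p * w₁) + 2 * (v₂ p * w₂) + Pr * R * (2 * (θ p * w₃))
      = 2 * (fderiv ℝ (bA Pr R v₁ v₂ θ q) p (1, 0) + fderiv ℝ (bB Pr R v₁ v₂ θ q) p (0, 1))
        + 2 * (-(Pr * (((pdx v₁ p)^2 + (pdy v₁ p)^2 + (pdx v₂ p)^2 + (pdy v₂ p)^2)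
            + δ₀' * (v₁ p)^2 + δ₁' * (v₂ p)^2 + R * ((pdx θ p)^2 + (pdy θ p)^2)))
          + 2 * Pr * R * (v₂ p * θ p)) := by
  rw [← pdx_eq_fderiv ((contDiff_bA h₁ h₂ h₃ h₄).differentiable (by simp)) p,
    ← pdy_eq_fderiv ((contDiff_bB h₁ h₂ h₃ h₄).differentiable (by simp)) p,
    pdx_bA h₁ h₂ h₃ h₄ p, pdy_bB h₁ h₂ h₃ h₄ p]
  unfold adv lap at e₁ e₂ e₃
  linear_combination (2 * v₁ p) * e₁ + (2 * v₂ p) * e₂ + (2 * Pr * R * θ p) * e₃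
    + (2 * ((1/2) * ((v₁ p)^2 + (v₂ p)^2 + Pr * R * (θ p)^2)) + 2 * Pr * q p) * hdiv

end EnergyAux


namespace EnergyAux2

/-- the time derivative of a time-dependent field, expressed via `fderiv` of the uncurried map -/
noncomputable def tder (u : ℝ × ℝ → ℝ → ℝ) (p : ℝ × ℝ) (s : ℝ) : ℝ :=
  fderiv ℝ (fun q : (ℝ × ℝ) × ℝ => u q.1 q.2) (p, s) ((0 : ℝ × ℝ), (1 : ℝ))

variable {u : ℝ × ℝ → ℝ → ℝ}

lemma hasDerivAt_tder (hu : ContDiff ℝ (⊤ : ℕ∞) (fun q : (ℝ × ℝ) × ℝ => u q.1 q.2))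
    (p : ℝ × ℝ) (s : ℝ) : HasDerivAt (u p) (tder u p s) s := by
  have h := ((hu.differentiable (by simp)) (p, s)).hasFDerivAt.comp_hasDerivAt s
    ((hasDerivAt_const s p).prodMk (hasDerivAt_id s))
  exact h

lemma deriv_eq_tder (hu : ContDiff ℝ (⊤ : ℕ∞) (fun q : (ℝ × ℝ) × ℝ => u q.1 q.2))
    (p : ℝ × ℝ) (s : ℝ) : deriv (u p) s = tder u p s :=
  (hasDerivAt_tder hu p s).deriv

lemma continuous_tder (hu : ContDiff ℝ (⊤ : ℕ∞) (fun q : (ℝ × ℝ) × ℝ => u q.1 q.2)) :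
    Continuous (fun z : (ℝ × ℝ) × ℝ => tder u z.1 z.2) := by
  have h : (fun z : (ℝ × ℝ) × ℝ => tder u z.1 z.2)
      = fun z : (ℝ × ℝ) × ℝ =>
        fderiv ℝ (fun q : (ℝ × ℝ) × ℝ => u q.1 q.2) z ((0 : ℝ × ℝ), (1 : ℝ)) := by
    funext z; rw [tder]
  rw [h]
  exact ContDiff.continuous (n := (⊤ : ℕ∞)) ((hu.fderiv_right (by simp)).clm_apply contDiff_const)

/-- the slice at fixed time of a smooth time-dependent field is smooth -/
lemma contDiff_slice (hu : ContDiff ℝ (⊤ : ℕ∞) (fun q : (ℝ × ℝ) × ℝ => u q.1 q.2)) (t : ℝ) :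
    ContDiff ℝ (⊤ : ℕ∞) (fun x => u x t) :=
  hu.comp (contDiff_id.prodMk contDiff_const)

end EnergyAux2


/-- energy identity for the nondimensional equatorial Boussinesq system:
`d/dt [½∫(u₁² + u₂² + Pr·R·T²)] = −Pr[∫|∇u|² + δ₀′∫u₁² + δ₁′∫u₂² + R∫|∇T|²] + 2PrR∫u₂T`. -/
theorem energy_identity
    (r₀ Pr R δ₀' δ₁' τ : ℝ) (hr₀ : 0 < r₀) (hPr : 0 < Pr) (hR : 0 < R) (hτ : 0 < τ)
    (u₁ u₂ T pr : ℝ × ℝ → ℝ → ℝ)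
    (hu₁ : ContDiff ℝ (⊤ : ℕ∞) (fun q : (ℝ × ℝ) × ℝ => u₁ q.1 q.2))
    (hu₂ : ContDiff ℝ (⊤ : ℕ∞) (fun q : (ℝ × ℝ) × ℝ => u₂ q.1 q.2))
    (hT : ContDiff ℝ (⊤ : ℕ∞) (fun q : (ℝ × ℝ) × ℝ => T q.1 q.2))
    (hp : ContDiff ℝ (⊤ : ℕ∞) (fun q : (ℝ × ℝ) × ℝ => pr q.1 q.2))
    (hperu₁ : ∀ t, Per r₀ (fun x => u₁ x t)) (hperu₂ : ∀ t, Per r₀ (fun x => u₂ x t))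
    (hperT : ∀ t, Per r₀ (fun x => T x t)) (hperp : ∀ t, Per r₀ (fun x => pr x t))
    (hdiv : ∀ t ∈ Set.Icc (0 : ℝ) τ, ∀ p ∈ strip r₀,
      pdx (fun x => u₁ x t) p + pdy (fun x => u₂ x t) p = 0)
    (hbc : ∀ x₁ : ℝ, ∀ t ∈ Set.Icc (0 : ℝ) τ,
      u₂ (x₁, r₀) t = 0 ∧ u₂ (x₁, r₀ + 1) t = 0 ∧
      pdy (fun x => u₁ x t) (x₁, r₀) = 0 ∧ pdy (fun x => u₁ x t) (x₁, r₀ + 1) = 0 ∧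
      T (x₁, r₀) t = 0 ∧ T (x₁, r₀ + 1) t = 0)
    (heq₁ : ∀ t ∈ Set.Icc (0 : ℝ) τ, ∀ p ∈ strip r₀,
      deriv (u₁ p) t + adv (fun x => u₁ x t) (fun x => u₂ x t) (fun x => u₁ x t) p
          + u₁ p t * u₂ p t / r₀
        = Pr * (lap (fun x => u₁ x t) p - δ₀' * u₁ p t - pdx (fun x => pr x t) p))
    (heq₂ : ∀ t ∈ Set.Icc (0 : ℝ) τ, ∀ p ∈ strip r₀,
      deriv (u₂ p) t + adv (fun x => u₁ x t) (fun x => u₂ x t) (fun x => u₂ x t) p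
          - (u₁ p t) ^ 2 / r₀
        = Pr * (lap (fun x => u₂ x t) p - δ₁' * u₂ p t + R * T p t
            - pdy (fun x => pr x t) p))
    (heq₃ : ∀ t ∈ Set.Icc (0 : ℝ) τ, ∀ p ∈ strip r₀,
      deriv (T p) t + adv (fun x => u₁ x t) (fun x => u₂ x t) (fun x => T x t) p
        = lap (fun x => T x t) p + u₂ p t) :
    ∀ t ∈ Set.Ioo (0 : ℝ) τ,
      HasDerivAt
        (fun s => (1 / 2) * ∫ p in cell r₀,
          ((u₁ p s) ^ 2 + (u₂ p s) ^ 2 + Pr * R * (T p s) ^ 2))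
        (-(Pr * ((∫ p in cell r₀,
              ((pdx (fun x => u₁ x t) p) ^ 2 + (pdy (fun x => u₁ x t) p) ^ 2
                + (pdx (fun x => u₂ x t) p) ^ 2 + (pdy (fun x => u₂ x t) p) ^ 2))
            + δ₀' * (∫ p in cell r₀, (u₁ p t) ^ 2)
            + δ₁' * (∫ p in cell r₀, (u₂ p t) ^ 2)
            + R * (∫ p in cell r₀,
                ((pdx (fun x => T x t) p) ^ 2 + (pdy (fun x => T x t) p) ^ 2))))
          + 2 * Pr * R * (∫ p in cell r₀, u₂ p t * T p t))
        t := by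

  intro t ht
  have ht' : t ∈ Set.Icc (0 : ℝ) τ := ⟨ht.1.le, ht.2.le⟩
  open EnergyAux EnergyAux2 in
  -- continuity of basic fields
  have c₁ : Continuous (fun q : (ℝ × ℝ) × ℝ => u₁ q.1 q.2) := hu₁.continuous
  have c₂ : Continuous (fun q : (ℝ × ℝ) × ℝ => u₂ q.1 q.2) := hu₂.continuous
  have c₃ : Continuous (fun q : (ℝ × ℝ) × ℝ => T q.1 q.2) := hT.continuous
  have ct₁ := EnergyAux2.continuous_tder hu₁
  have ct₂ := EnergyAux2.continuous_tder hu₂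
  have ct₃ := EnergyAux2.continuous_tder hT
  have cΦ : Continuous (fun z : (ℝ × ℝ) × ℝ =>
      2 * (u₁ z.1 z.2 * EnergyAux2.tder u₁ z.1 z.2)
        + 2 * (u₂ z.1 z.2 * EnergyAux2.tder u₂ z.1 z.2)
        + Pr * R * (2 * (T z.1 z.2 * EnergyAux2.tder T z.1 z.2))) := by fun_prop
  obtain ⟨C, hC⟩ := ((EnergyAux.isCompact_cell r₀).prod
    (isCompact_closedBall t 1)).exists_bound_of_continuousOn cΦ.continuousOn
  have key := hasDerivAt_integral_of_dominated_loc_of_deriv_le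
    (μ := volume.restrict (cell r₀)) (x₀ := t)
    (F := fun s p => u₁ p s ^ 2 + u₂ p s ^ 2 + Pr * R * T p s ^ 2)
    (F' := fun s p => 2 * (u₁ p s * EnergyAux2.tder u₁ p s)
      + 2 * (u₂ p s * EnergyAux2.tder u₂ p s)
      + Pr * R * (2 * (T p s * EnergyAux2.tder T p s)))
    (bound := fun _ => C) (s := Metric.ball t 1) (Metric.ball_mem_nhds t one_pos)
    (Filter.Eventually.of_forall fun s => by
      have : Continuous (fun p : ℝ × ℝ => u₁ p s ^ 2 + u₂ p s ^ 2 + Pr * R * T p s ^ 2) := by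
        fun_prop
      exact this.aestronglyMeasurable)
    (by
      have : Continuous (fun p : ℝ × ℝ => u₁ p t ^ 2 + u₂ p t ^ 2 + Pr * R * T p t ^ 2) := by
        fun_prop
      exact EnergyAux.integrableOn_cell this)
    (by
      have : Continuous (fun p : ℝ × ℝ => 2 * (u₁ p t * EnergyAux2.tder u₁ p t)
          + 2 * (u₂ p t * EnergyAux2.tder u₂ p t)
          + Pr * R * (2 * (T p t * EnergyAux2.tder T p t))) := by fun_prop
      exact this.aestronglyMeasurable)
    (by
      filter_upwards [MeasureTheory.ae_restrict_mem (EnergyAux.measurableSet_cell r₀)] with p hp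
      intro s hs
      exact hC (p, s) ⟨hp, Metric.ball_subset_closedBall hs⟩)
    ((integrableOn_const_iff (C := C) (s := cell r₀) (μ := volume)).2
      (Or.inr ((EnergyAux.isCompact_cell r₀).measure_lt_top)))
    (Filter.Eventually.of_forall fun p => by
      intro s _
      have h₁ := EnergyAux2.hasDerivAt_tder hu₁ p s
      have h₂ := EnergyAux2.hasDerivAt_tder hu₂ p s
      have h₃ := EnergyAux2.hasDerivAt_tder hT p s
      have h := (((h₁.pow 2).add (h₂.pow 2)).add ((h₃.pow 2).const_mul (Pr * R)))
      show HasDerivAt (fun x => u₁ p x ^ 2 + u₂ p x ^ 2 + Pr * R * T p x ^ 2)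
        (2 * (u₁ p s * EnergyAux2.tder u₁ p s) + 2 * (u₂ p s * EnergyAux2.tder u₂ p s)
          + Pr * R * (2 * (T p s * EnergyAux2.tder T p s))) s
      exact h.congr_deriv (by push_cast; ring))
  have KEY : HasDerivAt
      (fun s => ∫ p in cell r₀, (u₁ p s ^ 2 + u₂ p s ^ 2 + Pr * R * T p s ^ 2))
      (∫ p in cell r₀, (2 * (u₁ p t * EnergyAux2.tder u₁ p t)
        + 2 * (u₂ p t * EnergyAux2.tder u₂ p t)
        + Pr * R * (2 * (T p t * EnergyAux2.tder T p t)))) t := key.2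
  have KEY2 := KEY.const_mul (1/2 : ℝ)
  -- smoothness of time slices
  have hv₁ : ContDiff ℝ (⊤ : ℕ∞) (fun x => u₁ x t) := EnergyAux2.contDiff_slice hu₁ t
  have hv₂ : ContDiff ℝ (⊤ : ℕ∞) (fun x => u₂ x t) := EnergyAux2.contDiff_slice hu₂ t
  have hv₃ : ContDiff ℝ (⊤ : ℕ∞) (fun x => T x t) := EnergyAux2.contDiff_slice hT t
  have hv₄ : ContDiff ℝ (⊤ : ℕ∞) (fun x => pr x t) := EnergyAux2.contDiff_slice hp t
  have cGA : ContDiff ℝ (⊤ : ℕ∞) (EnergyAux.bA Pr R (fun x => u₁ x t) (fun x => u₂ x t)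
      (fun x => T x t) (fun x => pr x t)) := EnergyAux.contDiff_bA hv₁ hv₂ hv₃ hv₄
  have cGB : ContDiff ℝ (⊤ : ℕ∞) (EnergyAux.bB Pr R (fun x => u₁ x t) (fun x => u₂ x t)
      (fun x => T x t) (fun x => pr x t)) := EnergyAux.contDiff_bB hv₁ hv₂ hv₃ hv₄
  have cfA : Continuous (fun p : ℝ × ℝ => fderiv ℝ (EnergyAux.bA Pr R (fun x => u₁ x t)
      (fun x => u₂ x t) (fun x => T x t) (fun x => pr x t)) p ((1:ℝ), (0:ℝ))) :=
    ContDiff.continuous (n := (⊤ : ℕ∞)) ((cGA.fderiv_right (by simp)).clm_apply contDiff_const)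
  have cfB : Continuous (fun p : ℝ × ℝ => fderiv ℝ (EnergyAux.bB Pr R (fun x => u₁ x t)
      (fun x => u₂ x t) (fun x => T x t) (fun x => pr x t)) p ((0:ℝ), (1:ℝ))) :=
    ContDiff.continuous (n := (⊤ : ℕ∞)) ((cGB.fderiv_right (by simp)).clm_apply contDiff_const)
  -- continuity of derivative fields
  have cpx₁ : Continuous (pdx (fun x => u₁ x t)) := (EnergyAux.contDiff_pdx hv₁).continuous
  have cpy₁ : Continuous (pdy (fun x => u₁ x t)) := (EnergyAux.contDiff_pdy hv₁).continuous
  have cpx₂ : Continuous (pdx (fun x => u₂ x t)) := (EnergyAux.contDiff_pdx hv₂).continuous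
  have cpy₂ : Continuous (pdy (fun x => u₂ x t)) := (EnergyAux.contDiff_pdy hv₂).continuous
  have cpx₃ : Continuous (pdx (fun x => T x t)) := (EnergyAux.contDiff_pdx hv₃).continuous
  have cpy₃ : Continuous (pdy (fun x => T x t)) := (EnergyAux.contDiff_pdy hv₃).continuous
  have cv₁ : Continuous (fun p : ℝ × ℝ => u₁ p t) := hv₁.continuous
  have cv₂ : Continuous (fun p : ℝ × ℝ => u₂ p t) := hv₂.continuous
  have cv₃ : Continuous (fun p : ℝ × ℝ => T p t) := hv₃.continuous
  -- the pointwise identity on the cell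
  have step1 : ∀ p ∈ cell r₀,
      (2 * (u₁ p t * EnergyAux2.tder u₁ p t) + 2 * (u₂ p t * EnergyAux2.tder u₂ p t)
        + Pr * R * (2 * (T p t * EnergyAux2.tder T p t)))
      = 2 * (fderiv ℝ (EnergyAux.bA Pr R (fun x => u₁ x t) (fun x => u₂ x t)
            (fun x => T x t) (fun x => pr x t)) p ((1:ℝ), (0:ℝ))
          + fderiv ℝ (EnergyAux.bB Pr R (fun x => u₁ x t) (fun x => u₂ x t)
            (fun x => T x t) (fun x => pr x t)) p ((0:ℝ), (1:ℝ)))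
        + 2 * (-(Pr * (((pdx (fun x => u₁ x t) p) ^ 2 + (pdy (fun x => u₁ x t) p) ^ 2
              + (pdx (fun x => u₂ x t) p) ^ 2 + (pdy (fun x => u₂ x t) p) ^ 2)
            + δ₀' * (u₁ p t) ^ 2 + δ₁' * (u₂ p t) ^ 2
            + R * ((pdx (fun x => T x t) p) ^ 2 + (pdy (fun x => T x t) p) ^ 2)))
          + 2 * Pr * R * (u₂ p t * T p t)) := by
    intro p hp
    have hps := EnergyAux.cell_subset_strip r₀ hp
    have e₁ := heq₁ t ht' p hps
    have e₂ := heq₂ t ht' p hps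
    have e₃ := heq₃ t ht' p hps
    rw [EnergyAux2.deriv_eq_tder hu₁ p t] at e₁
    rw [EnergyAux2.deriv_eq_tder hu₂ p t] at e₂
    rw [EnergyAux2.deriv_eq_tder hT p t] at e₃
    exact EnergyAux.pointwise Pr R δ₀' δ₁' r₀ (fun x => u₁ x t) (fun x => u₂ x t)
      (fun x => T x t) (fun x => pr x t) (EnergyAux2.tder u₁ p t) (EnergyAux2.tder u₂ p t)
      (EnergyAux2.tder T p t) hv₁ hv₂ hv₃ hv₄ p (hdiv t ht' p hps) e₁ e₂ e₃
  -- integrability facts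
  have hIdiv : MeasureTheory.Integrable (fun p : ℝ × ℝ =>
      fderiv ℝ (EnergyAux.bA Pr R (fun x => u₁ x t) (fun x => u₂ x t)
        (fun x => T x t) (fun x => pr x t)) p ((1:ℝ), (0:ℝ))
      + fderiv ℝ (EnergyAux.bB Pr R (fun x => u₁ x t) (fun x => u₂ x t)
        (fun x => T x t) (fun x => pr x t)) p ((0:ℝ), (1:ℝ)))
      (volume.restrict (cell r₀)) := EnergyAux.integrableOn_cell (cfA.add cfB)
  have hIW : MeasureTheory.Integrable (fun p : ℝ × ℝ =>
      (pdx (fun x => u₁ x t) p) ^ 2 + (pdy (fun x => u₁ x t) p) ^ 2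
        + (pdx (fun x => u₂ x t) p) ^ 2 + (pdy (fun x => u₂ x t) p) ^ 2)
      (volume.restrict (cell r₀)) := EnergyAux.integrableOn_cell (by fun_prop)
  have hIa : MeasureTheory.Integrable (fun p : ℝ × ℝ => (u₁ p t) ^ 2)
      (volume.restrict (cell r₀)) := EnergyAux.integrableOn_cell (by fun_prop)
  have hIb : MeasureTheory.Integrable (fun p : ℝ × ℝ => (u₂ p t) ^ 2)
      (volume.restrict (cell r₀)) := EnergyAux.integrableOn_cell (by fun_prop)
  have hIWT : MeasureTheory.Integrable (fun p : ℝ × ℝ =>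
      (pdx (fun x => T x t) p) ^ 2 + (pdy (fun x => T x t) p) ^ 2)
      (volume.restrict (cell r₀)) := EnergyAux.integrableOn_cell (by fun_prop)
  have hIc : MeasureTheory.Integrable (fun p : ℝ × ℝ => u₂ p t * T p t)
      (volume.restrict (cell r₀)) := EnergyAux.integrableOn_cell (by fun_prop)
  have hII : MeasureTheory.Integrable (fun p : ℝ × ℝ =>
      -(Pr * (((pdx (fun x => u₁ x t) p) ^ 2 + (pdy (fun x => u₁ x t) p) ^ 2
          + (pdx (fun x => u₂ x t) p) ^ 2 + (pdy (fun x => u₂ x t) p) ^ 2)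
        + δ₀' * (u₁ p t) ^ 2 + δ₁' * (u₂ p t) ^ 2
        + R * ((pdx (fun x => T x t) p) ^ 2 + (pdy (fun x => T x t) p) ^ 2)))
      + 2 * Pr * R * (u₂ p t * T p t)) (volume.restrict (cell r₀)) :=
    ((((hIW.add (hIa.const_mul δ₀')).add (hIb.const_mul δ₁')).add
      (hIWT.const_mul R)).const_mul Pr).neg.add (hIc.const_mul (2 * Pr * R))
  -- the divergence part integrates to zero
  have step4 : ∫ p in cell r₀,
      (fderiv ℝ (EnergyAux.bA Pr R (fun x => u₁ x t) (fun x => u₂ x t)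
        (fun x => T x t) (fun x => pr x t)) p ((1:ℝ), (0:ℝ))
      + fderiv ℝ (EnergyAux.bB Pr R (fun x => u₁ x t) (fun x => u₂ x t)
        (fun x => T x t) (fun x => pr x t)) p ((0:ℝ), (1:ℝ))) = 0 := by
    have hDT := MeasureTheory.integral2_divergence_prod_of_hasFDerivAt_off_countable
      (EnergyAux.bA Pr R (fun x => u₁ x t) (fun x => u₂ x t) (fun x => T x t) (fun x => pr x t))
      (EnergyAux.bB Pr R (fun x => u₁ x t) (fun x => u₂ x t) (fun x => T x t) (fun x => pr x t))
      (fun p => fderiv ℝ (EnergyAux.bA Pr R (fun x => u₁ x t) (fun x => u₂ x t)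
        (fun x => T x t) (fun x => pr x t)) p)
      (fun p => fderiv ℝ (EnergyAux.bB Pr R (fun x => u₁ x t) (fun x => u₂ x t)
        (fun x => T x t) (fun x => pr x t)) p)
      0 r₀ (2 * Real.pi * r₀) (r₀ + 1) ∅ Set.countable_empty
      ((cGA.continuous).continuousOn) ((cGB.continuous).continuousOn)
      (fun x _ => (cGA.differentiable (by simp) x).hasFDerivAt)
      (fun x _ => (cGB.differentiable (by simp) x).hasFDerivAt)
      ((cfA.add cfB).continuousOn.integrableOn_compact (isCompact_uIcc.prod isCompact_uIcc))
    calc ∫ p in cell r₀,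
        (fderiv ℝ (EnergyAux.bA Pr R (fun x => u₁ x t) (fun x => u₂ x t)
          (fun x => T x t) (fun x => pr x t)) p ((1:ℝ), (0:ℝ))
        + fderiv ℝ (EnergyAux.bB Pr R (fun x => u₁ x t) (fun x => u₂ x t)
          (fun x => T x t) (fun x => pr x t)) p ((0:ℝ), (1:ℝ)))
        = ∫ x in (0:ℝ)..(2 * Real.pi * r₀), ∫ y in r₀..(r₀ + 1),
            (fderiv ℝ (EnergyAux.bA Pr R (fun x => u₁ x t) (fun x => u₂ x t)
              (fun x => T x t) (fun x => pr x t)) (x, y) ((1:ℝ), (0:ℝ))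
            + fderiv ℝ (EnergyAux.bB Pr R (fun x => u₁ x t) (fun x => u₂ x t)
              (fun x => T x t) (fun x => pr x t)) (x, y) ((0:ℝ), (1:ℝ))) :=
          EnergyAux.cell_integral_eq hr₀ _ (cfA.add cfB)
      _ = (((∫ x in (0:ℝ)..(2 * Real.pi * r₀), EnergyAux.bB Pr R (fun x => u₁ x t)
              (fun x => u₂ x t) (fun x => T x t) (fun x => pr x t) (x, r₀ + 1))
            - ∫ x in (0:ℝ)..(2 * Real.pi * r₀), EnergyAux.bB Pr R (fun x => u₁ x t)
              (fun x => u₂ x t) (fun x => T x t) (fun x => pr x t) (x, r₀))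
          + ∫ y in r₀..(r₀ + 1), EnergyAux.bA Pr R (fun x => u₁ x t) (fun x => u₂ x t)
              (fun x => T x t) (fun x => pr x t) (2 * Real.pi * r₀, y))
          - ∫ y in r₀..(r₀ + 1), EnergyAux.bA Pr R (fun x => u₁ x t) (fun x => u₂ x t)
              (fun x => T x t) (fun x => pr x t) (0, y) := hDT
      _ = 0 := by
          have hb1 : ∀ x : ℝ, EnergyAux.bB Pr R (fun x => u₁ x t) (fun x => u₂ x t)
              (fun x => T x t) (fun x => pr x t) (x, r₀ + 1) = 0 := fun x =>
            EnergyAux.bB_bc (hbc x t ht').2.2.2.1 (hbc x t ht').2.1 (hbc x t ht').2.2.2.2.2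
          have hb0 : ∀ x : ℝ, EnergyAux.bB Pr R (fun x => u₁ x t) (fun x => u₂ x t)
              (fun x => T x t) (fun x => pr x t) (x, r₀) = 0 := fun x =>
            EnergyAux.bB_bc (hbc x t ht').2.2.1 (hbc x t ht').1 (hbc x t ht').2.2.2.2.1
          have hper : (∫ y in r₀..(r₀ + 1), EnergyAux.bA Pr R (fun x => u₁ x t)
              (fun x => u₂ x t) (fun x => T x t) (fun x => pr x t) (2 * Real.pi * r₀, y))
              = ∫ y in r₀..(r₀ + 1), EnergyAux.bA Pr R (fun x => u₁ x t) (fun x => u₂ x t)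
                (fun x => T x t) (fun x => pr x t) (0, y) := by
            refine intervalIntegral.integral_congr fun y _ => ?_
            have := EnergyAux.per_bA (Pr := Pr) (R := R) (hperu₁ t) (hperu₂ t) (hperT t)
              (hperp t) ((0 : ℝ), y)
            simpa using this
          simp only [hb1, hb0, intervalIntegral.integral_const, smul_zero, hper]
          ring
  -- final computation of the derivative value
  have hval : (1/2 : ℝ) * ∫ p in cell r₀,
      (2 * (u₁ p t * EnergyAux2.tder u₁ p t) + 2 * (u₂ p t * EnergyAux2.tder u₂ p t)
        + Pr * R * (2 * (T p t * EnergyAux2.tder T p t)))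
      = -(Pr * ((∫ p in cell r₀,
            ((pdx (fun x => u₁ x t) p) ^ 2 + (pdy (fun x => u₁ x t) p) ^ 2
              + (pdx (fun x => u₂ x t) p) ^ 2 + (pdy (fun x => u₂ x t) p) ^ 2))
          + δ₀' * (∫ p in cell r₀, (u₁ p t) ^ 2)
          + δ₁' * (∫ p in cell r₀, (u₂ p t) ^ 2)
          + R * (∫ p in cell r₀,
              ((pdx (fun x => T x t) p) ^ 2 + (pdy (fun x => T x t) p) ^ 2))))
        + 2 * Pr * R * (∫ p in cell r₀, u₂ p t * T p t) := by
    rw [MeasureTheory.setIntegral_congr_fun (EnergyAux.measurableSet_cell r₀) step1]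
    rw [MeasureTheory.integral_add (hIdiv.const_mul 2) (hII.const_mul 2),
      MeasureTheory.integral_const_mul, MeasureTheory.integral_const_mul, step4]
    have hIa' : MeasureTheory.Integrable (fun p : ℝ × ℝ => δ₀' * (u₁ p t) ^ 2)
        (volume.restrict (cell r₀)) := hIa.const_mul δ₀'
    have hIb' : MeasureTheory.Integrable (fun p : ℝ × ℝ => δ₁' * (u₂ p t) ^ 2)
        (volume.restrict (cell r₀)) := hIb.const_mul δ₁'
    have hIWT' : MeasureTheory.Integrable (fun p : ℝ × ℝ =>
        R * ((pdx (fun x => T x t) p) ^ 2 + (pdy (fun x => T x t) p) ^ 2))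
        (volume.restrict (cell r₀)) := hIWT.const_mul R
    have hX1 : MeasureTheory.Integrable (fun p : ℝ × ℝ =>
        ((pdx (fun x => u₁ x t) p) ^ 2 + (pdy (fun x => u₁ x t) p) ^ 2
          + (pdx (fun x => u₂ x t) p) ^ 2 + (pdy (fun x => u₂ x t) p) ^ 2)
        + δ₀' * (u₁ p t) ^ 2) (volume.restrict (cell r₀)) := hIW.add hIa'
    have hX2 : MeasureTheory.Integrable (fun p : ℝ × ℝ =>
        ((pdx (fun x => u₁ x t) p) ^ 2 + (pdy (fun x => u₁ x t) p) ^ 2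
          + (pdx (fun x => u₂ x t) p) ^ 2 + (pdy (fun x => u₂ x t) p) ^ 2)
        + δ₀' * (u₁ p t) ^ 2 + δ₁' * (u₂ p t) ^ 2) (volume.restrict (cell r₀)) := hX1.add hIb'
    have hX3 : MeasureTheory.Integrable (fun p : ℝ × ℝ =>
        ((pdx (fun x => u₁ x t) p) ^ 2 + (pdy (fun x => u₁ x t) p) ^ 2
          + (pdx (fun x => u₂ x t) p) ^ 2 + (pdy (fun x => u₂ x t) p) ^ 2)
        + δ₀' * (u₁ p t) ^ 2 + δ₁' * (u₂ p t) ^ 2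
        + R * ((pdx (fun x => T x t) p) ^ 2 + (pdy (fun x => T x t) p) ^ 2))
        (volume.restrict (cell r₀)) := hX2.add hIWT'
    have hX4 : MeasureTheory.Integrable (fun p : ℝ × ℝ =>
        -(Pr * (((pdx (fun x => u₁ x t) p) ^ 2 + (pdy (fun x => u₁ x t) p) ^ 2
          + (pdx (fun x => u₂ x t) p) ^ 2 + (pdy (fun x => u₂ x t) p) ^ 2)
        + δ₀' * (u₁ p t) ^ 2 + δ₁' * (u₂ p t) ^ 2
        + R * ((pdx (fun x => T x t) p) ^ 2 + (pdy (fun x => T x t) p) ^ 2))))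
        (volume.restrict (cell r₀)) := (hX3.const_mul Pr).neg
    have hIc' : MeasureTheory.Integrable (fun p : ℝ × ℝ => 2 * Pr * R * (u₂ p t * T p t))
        (volume.restrict (cell r₀)) := hIc.const_mul (2 * Pr * R)
    rw [MeasureTheory.integral_add hX4 hIc',
      MeasureTheory.integral_neg, MeasureTheory.integral_const_mul,
      MeasureTheory.integral_add hX2 hIWT',
      MeasureTheory.integral_add hX1 hIb',
      MeasureTheory.integral_add hIW hIa',
      MeasureTheory.integral_const_mul, MeasureTheory.integral_const_mul,
      MeasureTheory.integral_const_mul, MeasureTheory.integral_const_mul]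
    ring
  rw [hval] at KEY2
  exact KEY2
end

section
/- Fix Pr > 0, 0 < R ≤ π⁴, δ₀′ ≥ 0, δ₁′ ≥ 0, r₀ > 0 and τ > 0. Let (u,T,p) be smooth on M × [0,τ], 2πr₀-periodic in x₁, with u divergence-free, satisfying u₂ = 0, ∂u₁/∂x₂ = 0, T = 0 at x₂ = r₀ and x₂ = r₀+1, and solving: ∂u₁/∂t + (u·∇)u₁ + u₁u₂/r₀ = Pr[Δu₁ − δ₀′u₁ − ∂p/∂x₁], ∂u₂/∂t + (u·∇)u₂ − u₁²/r₀ = Pr[Δu₂ − δ₁′u₂ + RT − ∂p/∂x₂], ∂T/∂t + (u·∇)T = ΔT + u₂. Then the energy E(t) = ½∫_M (u₁² + u₂² + Pr·R·T²) dx is nonincreasing on [0,τ]. -/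
open MeasureTheory Set

-- slice of a smooth 2D function has HasDerivAt in first coordinate
lemma hasDerivAt_slice1 (f : ℝ × ℝ → ℝ) (hf : Differentiable ℝ f) (x y : ℝ) :
    HasDerivAt (fun s => f (s, y)) (fderiv ℝ f (x, y) (1, 0)) x := by
  have h1 : HasDerivAt (fun s : ℝ => (s, y)) ((1 : ℝ), (0 : ℝ)) x := by
    have := ((hasDerivAt_id x).prodMk (hasDerivAt_const x y))
    simpa using this
  exact ((hf (x, y)).hasFDerivAt.comp_hasDerivAt x h1)

lemma hasDerivAt_slice2 (f : ℝ × ℝ → ℝ) (hf : Differentiable ℝ f) (x y : ℝ) :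
    HasDerivAt (fun s => f (x, s)) (fderiv ℝ f (x, y) (0, 1)) y := by
  have h1 : HasDerivAt (fun s : ℝ => (x, s)) ((0 : ℝ), (1 : ℝ)) y := by
    have := ((hasDerivAt_const y x).prodMk (hasDerivAt_id y))
    simpa using this
  exact ((hf (x, y)).hasFDerivAt.comp_hasDerivAt y h1)

lemma pdx_eq (f : ℝ × ℝ → ℝ) (hf : Differentiable ℝ f) (p : ℝ × ℝ) :
    pdx f p = fderiv ℝ f p (1, 0) := by
  have := (hasDerivAt_slice1 f hf p.1 p.2).deriv
  simpa [pdx] using this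

lemma pdy_eq (f : ℝ × ℝ → ℝ) (hf : Differentiable ℝ f) (p : ℝ × ℝ) :
    pdy f p = fderiv ℝ f p (0, 1) := by
  have := (hasDerivAt_slice2 f hf p.1 p.2).deriv
  simpa [pdy] using this

lemma contDiff_fderiv_apply (f : ℝ × ℝ → ℝ) (hf : ContDiff ℝ (⊤ : ℕ∞) f) (v : ℝ × ℝ) :
    ContDiff ℝ (⊤ : ℕ∞) (fun p => fderiv ℝ f p v) := by
  exact (hf.fderiv_right (by simp)).clm_apply contDiff_const

lemma contDiff_pdx (f : ℝ × ℝ → ℝ) (hf : ContDiff ℝ (⊤ : ℕ∞) f) : ContDiff ℝ (⊤ : ℕ∞) (pdx f) := by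
  have : pdx f = fun p => fderiv ℝ f p (1, 0) := funext (pdx_eq f (hf.differentiable (by simp)))
  rw [this]; exact contDiff_fderiv_apply f hf _

lemma contDiff_pdy (f : ℝ × ℝ → ℝ) (hf : ContDiff ℝ (⊤ : ℕ∞) f) : ContDiff ℝ (⊤ : ℕ∞) (pdy f) := by
  have : pdy f = fun p => fderiv ℝ f p (0, 1) := funext (pdy_eq f (hf.differentiable (by simp)))
  rw [this]; exact contDiff_fderiv_apply f hf _

-- product rules
lemma pdx_mul (f g : ℝ × ℝ → ℝ) (hf : Differentiable ℝ f) (hg : Differentiable ℝ g) (p : ℝ × ℝ) :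
    pdx (fun q => f q * g q) p = pdx f p * g p + f p * pdx g p := by
  have := ((hasDerivAt_slice1 f hf p.1 p.2).mul (hasDerivAt_slice1 g hg p.1 p.2)).deriv
  simp only [pdx]
  rw [show ((fun s => f (s, p.2)) * fun s => g (s, p.2)) = fun s => f (s, p.2) * g (s, p.2) from rfl] at this
  rw [this, (hasDerivAt_slice1 f hf p.1 p.2).deriv, (hasDerivAt_slice1 g hg p.1 p.2).deriv]


lemma pdy_mul (f g : ℝ × ℝ → ℝ) (hf : Differentiable ℝ f) (hg : Differentiable ℝ g) (p : ℝ × ℝ) :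
    pdy (fun q => f q * g q) p = pdy f p * g p + f p * pdy g p := by
  have := ((hasDerivAt_slice2 f hf p.1 p.2).mul (hasDerivAt_slice2 g hg p.1 p.2)).deriv
  simp only [pdy]
  rw [show ((fun s => f (p.1, s)) * fun s => g (p.1, s)) = fun s => f (p.1, s) * g (p.1, s) from rfl] at this
  rw [this, (hasDerivAt_slice2 f hf p.1 p.2).deriv, (hasDerivAt_slice2 g hg p.1 p.2).deriv]


lemma isCompact_cell (r₀ : ℝ) : IsCompact (cell r₀) :=
  isCompact_Icc.prod isCompact_Icc

lemma integrableOn_cell {r₀ : ℝ} {F : ℝ × ℝ → ℝ} (hF : Continuous F) :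
    IntegrableOn F (cell r₀) := hF.continuousOn.integrableOn_compact (isCompact_cell r₀)

lemma cell_fubini (r₀ : ℝ) (F : ℝ × ℝ → ℝ) (hF : Continuous F) :
    ∫ p in cell r₀, F p
      = ∫ y in Icc r₀ (r₀ + 1), ∫ x in Icc 0 (2 * Real.pi * r₀), F (x, y) := by
  have hI : IntegrableOn F (cell r₀) := integrableOn_cell hF
  rw [cell] at hI ⊢
  rw [Measure.volume_eq_prod] at hI ⊢
  rw [setIntegral_prod F hI]
  have hI2 : Integrable (Function.uncurry fun x y => F (x, y))
      ((volume.restrict (Icc 0 (2 * Real.pi * r₀))).prod (volume.restrict (Icc r₀ (r₀ + 1)))) := by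
    rw [Measure.prod_restrict]; exact hI
  exact integral_integral_swap hI2

lemma cell_fubini' (r₀ : ℝ) (F : ℝ × ℝ → ℝ) (hF : Continuous F) :
    ∫ p in cell r₀, F p
      = ∫ x in Icc 0 (2 * Real.pi * r₀), ∫ y in Icc r₀ (r₀ + 1), F (x, y) := by
  have hI : IntegrableOn F (cell r₀) := integrableOn_cell hF
  rw [cell] at hI ⊢
  rw [Measure.volume_eq_prod] at hI ⊢
  exact setIntegral_prod F hI

lemma integral_pdx_cell (r₀ : ℝ) (hr₀ : 0 < r₀) (g : ℝ × ℝ → ℝ)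
    (hg : ContDiff ℝ (⊤ : ℕ∞) g) (hper : Per r₀ g) :
    ∫ p in cell r₀, pdx g p = 0 := by
  have hd := hg.differentiable (by simp)
  rw [cell_fubini r₀ (pdx g) (contDiff_pdx g hg).continuous]
  have hL : (0 : ℝ) ≤ 2 * Real.pi * r₀ := by positivity
  have : ∀ y : ℝ, ∫ x in Icc 0 (2 * Real.pi * r₀), pdx g (x, y) = 0 := by
    intro y
    rw [integral_Icc_eq_integral_Ioc, ← intervalIntegral.integral_of_le hL]
    have h1 : ∫ x in (0 : ℝ)..(2 * Real.pi * r₀), pdx g (x, y)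
        = g (2 * Real.pi * r₀, y) - g (0, y) := by
      apply intervalIntegral.integral_eq_sub_of_hasDerivAt (f := fun s => g (s, y))
      · intro x _
        have := hasDerivAt_slice1 g hd x y
        rwa [← pdx_eq g hd (x, y)] at this
      · exact ((contDiff_pdx g hg).continuous.comp
          (continuous_id.prodMk continuous_const)).intervalIntegrable _ _
    rw [h1]
    have := hper (0, y)
    simp only at this
    rw [show (2 * Real.pi * r₀ : ℝ) = 0 + 2 * Real.pi * r₀ by ring, this]
    ring
  simp [this]

lemma integral_pdy_cell (r₀ : ℝ) (g : ℝ × ℝ → ℝ) (hg : ContDiff ℝ (⊤ : ℕ∞) g) :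
    ∫ p in cell r₀, pdy g p
      = ∫ x in Icc 0 (2 * Real.pi * r₀), (g (x, r₀ + 1) - g (x, r₀)) := by
  have hd := hg.differentiable (by simp)
  rw [cell_fubini' r₀ (pdy g) (contDiff_pdy g hg).continuous]
  have hle : (r₀ : ℝ) ≤ r₀ + 1 := by linarith
  apply setIntegral_congr_fun measurableSet_Icc
  intro x _
  dsimp only
  rw [integral_Icc_eq_integral_Ioc, ← intervalIntegral.integral_of_le hle]
  apply intervalIntegral.integral_eq_sub_of_hasDerivAt (f := fun s => g (x, s))
  · intro y _
    have := hasDerivAt_slice2 g hd x y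
    rwa [← pdy_eq g hd (x, y)] at this
  · exact ((contDiff_pdy g hg).continuous.comp
      (continuous_const.prodMk continuous_id)).intervalIntegrable _ _

lemma cell_subset_strip (r₀ : ℝ) : cell r₀ ⊆ strip r₀ := by
  intro p hp
  exact ⟨trivial, hp.2⟩

lemma Per.mul {r₀ : ℝ} {f g : ℝ × ℝ → ℝ} (hf : Per r₀ f) (hg : Per r₀ g) :
    Per r₀ (fun q => f q * g q) := by
  intro p; simp only [hf p, hg p]

lemma Per.pdx {r₀ : ℝ} {f : ℝ × ℝ → ℝ} (hf : Per r₀ f) : Per r₀ (pdx f) := by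
  intro p
  simp only [_root_.pdx]
  have hfun : (fun s => f (s, p.2)) = fun s => f (s + 2 * Real.pi * r₀, p.2) := by
    funext s; exact (hf (s, p.2)).symm
  calc deriv (fun s => f (s, p.2)) (p.1 + 2 * Real.pi * r₀)
      = deriv (fun s => f (s + 2 * Real.pi * r₀, p.2)) p.1 := by
        rw [← deriv_comp_add_const (fun s => f (s, p.2)) (2 * Real.pi * r₀)]
    _ = deriv (fun s => f (s, p.2)) p.1 := by rw [← hfun]

lemma Per.pdy {r₀ : ℝ} {f : ℝ × ℝ → ℝ} (hf : Per r₀ f) : Per r₀ (pdy f) := by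
  intro p
  simp only [_root_.pdy]
  have hfun : (fun s => f (p.1 + 2 * Real.pi * r₀, s)) = fun s => f (p.1, s) := by
    funext s; exact hf (p.1, s)
  rw [hfun]

/-- The weighted-divergence identity: `∫ (v₁ ∂₁φ + v₂ ∂₂φ) = 0`. -/
lemma J_zero (r₀ : ℝ) (hr₀ : 0 < r₀) (v₁ v₂ φ : ℝ × ℝ → ℝ)
    (h₁ : ContDiff ℝ (⊤ : ℕ∞) v₁) (h₂ : ContDiff ℝ (⊤ : ℕ∞) v₂) (hφ : ContDiff ℝ (⊤ : ℕ∞) φ)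
    (hp₁ : Per r₀ v₁) (hp₂ : Per r₀ v₂) (hpφ : Per r₀ φ)
    (hdiv : ∀ p ∈ strip r₀, pdx v₁ p + pdy v₂ p = 0)
    (hb : ∀ x : ℝ, v₂ (x, r₀) = 0 ∧ v₂ (x, r₀ + 1) = 0) :
    ∫ p in cell r₀, (v₁ p * pdx φ p + v₂ p * pdy φ p) = 0 := by
  have hd₁ := h₁.differentiable (by simp)
  have hd₂ := h₂.differentiable (by simp)
  have hdφ := hφ.differentiable (by simp)
  have key : ∀ p ∈ cell r₀,
      v₁ p * pdx φ p + v₂ p * pdy φ p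
        = pdx (fun q => v₁ q * φ q) p + pdy (fun q => v₂ q * φ q) p := by
    intro p hp
    rw [pdx_mul v₁ φ hd₁ hdφ p, pdy_mul v₂ φ hd₂ hdφ p]
    have := hdiv p (cell_subset_strip r₀ hp)
    linear_combination (-φ p) * this
  rw [setIntegral_congr_fun (isCompact_cell r₀).measurableSet key]
  have hI1 : IntegrableOn (pdx (fun q => v₁ q * φ q)) (cell r₀) :=
    integrableOn_cell (contDiff_pdx _ (h₁.mul hφ)).continuous
  have hI2 : IntegrableOn (pdy (fun q => v₂ q * φ q)) (cell r₀) :=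
    integrableOn_cell (contDiff_pdy _ (h₂.mul hφ)).continuous
  rw [integral_add hI1 hI2]
  rw [integral_pdx_cell r₀ hr₀ _ (h₁.mul hφ) (hp₁.mul hpφ)]
  rw [integral_pdy_cell r₀ _ (h₂.mul hφ)]
  have : ∀ x ∈ Icc (0:ℝ) (2 * Real.pi * r₀),
      v₂ (x, r₀ + 1) * φ (x, r₀ + 1) - v₂ (x, r₀) * φ (x, r₀) = 0 := by
    intro x _
    rw [(hb x).1, (hb x).2]; ring
  rw [setIntegral_congr_fun measurableSet_Icc this]
  simp

/-- Integration by parts for the Laplacian. -/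
lemma integral_mul_lap (r₀ : ℝ) (hr₀ : 0 < r₀) (f : ℝ × ℝ → ℝ)
    (hf : ContDiff ℝ (⊤ : ℕ∞) f) (hp : Per r₀ f)
    (hb : ∀ x : ℝ, f (x, r₀) * pdy f (x, r₀) = 0 ∧ f (x, r₀ + 1) * pdy f (x, r₀ + 1) = 0) :
    ∫ p in cell r₀, f p * lap f p
      = - ∫ p in cell r₀, ((pdx f p) ^ 2 + (pdy f p) ^ 2) := by
  have hd := hf.differentiable (by simp)
  have hfx := contDiff_pdx f hf
  have hfy := contDiff_pdy f hf
  have key : ∀ p ∈ cell r₀,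
      f p * lap f p
        = (pdx (fun q => f q * pdx f q) p + pdy (fun q => f q * pdy f q) p)
          - ((pdx f p) ^ 2 + (pdy f p) ^ 2) := by
    intro p _
    rw [pdx_mul f (pdx f) hd (hfx.differentiable (by simp)) p,
        pdy_mul f (pdy f) hd (hfy.differentiable (by simp)) p, lap]
    ring
  rw [setIntegral_congr_fun (isCompact_cell r₀).measurableSet key]
  have hI1 : IntegrableOn (fun p => pdx (fun q => f q * pdx f q) p
      + pdy (fun q => f q * pdy f q) p) (cell r₀) :=
    integrableOn_cell (((contDiff_pdx _ (hf.mul hfx)).continuous).add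
      ((contDiff_pdy _ (hf.mul hfy)).continuous))
  have hI2 : IntegrableOn (fun p => (pdx f p) ^ 2 + (pdy f p) ^ 2) (cell r₀) :=
    integrableOn_cell (((hfx.continuous).pow 2).add ((hfy.continuous).pow 2))
  rw [integral_sub hI1 hI2]
  have hI1a : IntegrableOn (pdx (fun q => f q * pdx f q)) (cell r₀) :=
    integrableOn_cell (contDiff_pdx _ (hf.mul hfx)).continuous
  have hI1b : IntegrableOn (pdy (fun q => f q * pdy f q)) (cell r₀) :=
    integrableOn_cell (contDiff_pdy _ (hf.mul hfy)).continuous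
  rw [integral_add hI1a hI1b]
  rw [integral_pdx_cell r₀ hr₀ _ (hf.mul hfx) (hp.mul hp.pdx)]
  rw [integral_pdy_cell r₀ _ (hf.mul hfy)]
  have : ∀ x ∈ Icc (0:ℝ) (2 * Real.pi * r₀),
      f (x, r₀ + 1) * pdy f (x, r₀ + 1) - f (x, r₀) * pdy f (x, r₀) = 0 := by
    intro x _
    rw [(hb x).1, (hb x).2]; ring
  rw [setIntegral_congr_fun measurableSet_Icc this]
  simp

lemma poincare1d (f : ℝ → ℝ) (hf : ContDiff ℝ (⊤ : ℕ∞) f) (a : ℝ)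
    (h0 : f a = 0) (h1 : f (a + 1) = 0) :
    Real.pi ^ 2 * ∫ y in Icc a (a + 1), f y ^ 2 ≤ ∫ y in Icc a (a + 1), (deriv f y) ^ 2 := by
  have pipos := Real.pi_pos
  have hdc : Continuous (deriv f) := hf.continuous_deriv (by simp)
  have hfc : Continuous f := hf.continuous
  have hdf : ∀ x, HasDerivAt f (deriv f x) x :=
    fun x => (hf.differentiable (by simp) x).hasDerivAt
  set s : ℝ → ℝ := fun x => Real.sin (Real.pi * (x - a)) with hs_def
  set c : ℝ → ℝ := fun x => Real.cos (Real.pi * (x - a)) with hc_def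
  have hinner : ∀ x : ℝ, HasDerivAt (fun x => Real.pi * (x - a)) Real.pi x := by
    intro x
    simpa using ((hasDerivAt_id x).sub_const a).const_mul Real.pi
  have hs : ∀ x, HasDerivAt s (Real.pi * c x) x := by
    intro x
    simpa [hs_def, hc_def, mul_comm] using
      (hinner x).sin
  have hcd : ∀ x, HasDerivAt c (-(Real.pi * s x)) x := by
    intro x
    have := (hinner x).cos
    simpa [hs_def, hc_def, mul_comm] using this
  set h : ℝ → ℝ := fun x => (deriv f x) ^ 2 - Real.pi ^ 2 * f x ^ 2 with hh_def
  have hhc : Continuous h := (hdc.pow 2).sub (continuous_const.mul (hfc.pow 2))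
  set k : ℝ → ℝ := fun x =>
    (deriv f x * s x - Real.pi * f x * c x) ^ 2 / (s x) ^ 2 with hk_def
  set F : ℝ → ℝ := fun x => Real.pi * f x ^ 2 * c x / s x with hF_def
  have hspos : ∀ x ∈ Ioo a (a + 1), 0 < s x := by
    intro x hx
    apply Real.sin_pos_of_pos_of_lt_pi
    · have : 0 < x - a := by linarith [hx.1]
      positivity
    · have h2 : x - a < 1 := by linarith [hx.2]
      nlinarith
  have hFd : ∀ x ∈ Ioo a (a + 1), HasDerivAt F (h x - k x) x := by
    intro x hx
    have hsne : s x ≠ 0 := ne_of_gt (hspos x hx)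
    have hN : HasDerivAt (fun x => Real.pi * f x ^ 2 * c x)
        ((Real.pi * (2 * f x ^ 1 * deriv f x)) * c x
          + (Real.pi * f x ^ 2) * (-(Real.pi * s x))) x :=
      (((hdf x).pow 2).const_mul Real.pi).mul (hcd x)
    have hdiv := hN.div (hs x) hsne
    refine hdiv.congr_deriv ?_
    rw [hh_def, hk_def]
    field_simp
    ring
  obtain ⟨C, hC⟩ := (isCompact_Icc (a := a) (b := a + 1)).exists_bound_of_continuousOn
    hdc.continuousOn
  have hC0 : 0 ≤ C := le_trans (norm_nonneg _) (hC a ⟨le_refl a, by linarith⟩)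
  have hMVT : ∀ x ∈ Icc a (a + 1), ∀ y ∈ Icc a (a + 1), |f x - f y| ≤ C * |x - y| := by
    intro x hx y hy
    have := (convex_Icc a (a + 1)).norm_image_sub_le_of_norm_deriv_le
      (fun z _ => hf.differentiable (by simp) z) hC hx hy
    rw [abs_sub_comm, abs_sub_comm x y]
    simpa [Real.norm_eq_abs] using this
  set H : ℝ → ℝ := fun y => ∫ x in a..y, h x with hH_def
  have hHcont : Continuous H :=
    intervalIntegral.continuous_primitive (fun _ _ => hhc.intervalIntegrable _ _) a
  have key : ∀ δ ∈ Ioo (0 : ℝ) (1 / 2),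
      F (a + 1 - δ) - F (a + δ) ≤ H (a + 1 - δ) - H (a + δ) := by
    intro δ hδ
    have hab' : a + δ ≤ a + 1 - δ := by linarith [hδ.1, hδ.2]
    have hsub : Icc (a + δ) (a + 1 - δ) ⊆ Ioo a (a + 1) := by
      intro x hx
      exact ⟨by linarith [hx.1, hδ.1], by linarith [hx.2, hδ.1]⟩
    have huIcc : uIcc (a + δ) (a + 1 - δ) = Icc (a + δ) (a + 1 - δ) := uIcc_of_le hab'
    have hkcont : ContinuousOn k (Icc (a + δ) (a + 1 - δ)) := by
      apply ContinuousOn.div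
      · exact (((hdc.mul (by fun_prop)).sub
          ((continuous_const.mul hfc).mul (by fun_prop))).pow 2).continuousOn
      · exact (Continuous.pow (by fun_prop : Continuous s) 2).continuousOn
      · intro x hx
        exact pow_ne_zero 2 (ne_of_gt (hspos x (hsub hx)))
    have hkint : IntervalIntegrable k volume (a + δ) (a + 1 - δ) :=
      (hkcont.mono (le_of_eq huIcc)).intervalIntegrable
    have hhint : IntervalIntegrable h volume (a + δ) (a + 1 - δ) :=
      hhc.intervalIntegrable _ _
    have hftc : ∫ x in (a + δ)..(a + 1 - δ), (h x - k x) = F (a + 1 - δ) - F (a + δ) := by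
      apply intervalIntegral.integral_eq_sub_of_hasDerivAt (f := F)
      · intro x hx
        rw [huIcc] at hx
        exact hFd x (hsub hx)
      · exact hhint.sub hkint
    have hksplit : ∫ x in (a + δ)..(a + 1 - δ), (h x - k x)
        = (∫ x in (a + δ)..(a + 1 - δ), h x) - ∫ x in (a + δ)..(a + 1 - δ), k x :=
      intervalIntegral.integral_sub hhint hkint
    have hknn : 0 ≤ ∫ x in (a + δ)..(a + 1 - δ), k x := by
      apply intervalIntegral.integral_nonneg hab'
      intro x _
      exact div_nonneg (sq_nonneg _) (sq_nonneg _)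
    have hHdiff : (∫ x in (a + δ)..(a + 1 - δ), h x) = H (a + 1 - δ) - H (a + δ) := by
      rw [hH_def]
      rw [← intervalIntegral.integral_interval_sub_left
        (hhc.intervalIntegrable a (a + 1 - δ)) (hhc.intervalIntegrable a (a + δ))]
    linarith [hftc, hksplit, hknn, hHdiff]
  have hmem : Ioo (0 : ℝ) (1 / 2) ∈ nhdsWithin (0 : ℝ) (Ioi 0) :=
    Ioo_mem_nhdsGT_of_mem ⟨le_refl _, by norm_num⟩
  have tendH : Filter.Tendsto (fun δ : ℝ => H (a + 1 - δ) - H (a + δ))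
      (nhdsWithin 0 (Ioi 0)) (nhds (H (a + 1) - H a)) := by
    have h2 : Filter.Tendsto (fun δ : ℝ => H (a + 1 - δ) - H (a + δ)) (nhds 0)
        (nhds (H (a + 1 - 0) - H (a + 0))) :=
      ((hHcont.comp (by fun_prop)).sub (hHcont.comp (by fun_prop))).tendsto 0
    simpa using h2.mono_left nhdsWithin_le_nhds
  have hFbound : ∀ δ ∈ Ioo (0 : ℝ) (1 / 2), ∀ x ∈ Icc a (a + 1), ∀ y ∈ Icc a (a + 1),
      f y = 0 → s x = Real.sin (Real.pi * δ) → |x - y| ≤ δ →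
      |F x| ≤ Real.pi * C ^ 2 * δ / 2 := by
    intro δ hδ x hx y hy hfy hsx hxy
    have hδ0 : (0 : ℝ) < δ := hδ.1
    have hsin : 2 * δ ≤ Real.sin (Real.pi * δ) := by
      have h2 := Real.mul_le_sin (x := Real.pi * δ) (by positivity) (by nlinarith [hδ.2])
      calc 2 * δ = 2 / Real.pi * (Real.pi * δ) := by field_simp
      _ ≤ _ := h2
    have hsinpos : 0 < Real.sin (Real.pi * δ) := by linarith
    have hfx : |f x| ≤ C * δ := by
      have := hMVT x hx y hy
      rw [hfy, sub_zero] at this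
      calc |f x| ≤ C * |x - y| := this
      _ ≤ C * δ := mul_le_mul_of_nonneg_left hxy hC0
    have hnum : |Real.pi * f x ^ 2 * c x| ≤ Real.pi * (C * δ) ^ 2 := by
      rw [abs_mul, abs_mul, abs_of_pos pipos]
      have h3 : |f x ^ 2| ≤ (C * δ) ^ 2 := by
        rw [abs_pow]
        exact pow_le_pow_left₀ (abs_nonneg _) hfx 2
      have h4 : |c x| ≤ 1 := by
        rw [hc_def]
        exact Real.abs_cos_le_one _
      have h5 : |f x ^ 2| * |c x| ≤ (C * δ) ^ 2 * 1 :=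
        mul_le_mul h3 h4 (abs_nonneg _) (sq_nonneg _)
      calc Real.pi * |f x ^ 2| * |c x| = Real.pi * (|f x ^ 2| * |c x|) := by ring
      _ ≤ Real.pi * ((C * δ) ^ 2 * 1) := mul_le_mul_of_nonneg_left h5 (le_of_lt pipos)
      _ = Real.pi * (C * δ) ^ 2 := by ring
    have hFx : |F x| = |Real.pi * f x ^ 2 * c x| / Real.sin (Real.pi * δ) := by
      rw [hF_def]
      rw [abs_div, hsx, abs_of_pos hsinpos]
    rw [hFx]
    calc |Real.pi * f x ^ 2 * c x| / Real.sin (Real.pi * δ)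
        ≤ Real.pi * (C * δ) ^ 2 / (2 * δ) :=
          div_le_div₀ (by positivity) hnum (by linarith) hsin
    _ = Real.pi * C ^ 2 * δ / 2 := by field_simp
  have tendF : Filter.Tendsto (fun δ : ℝ => F (a + 1 - δ) - F (a + δ))
      (nhdsWithin 0 (Ioi 0)) (nhds 0) := by
    apply squeeze_zero_norm' (a := fun δ => Real.pi * C ^ 2 * δ)
    · filter_upwards [hmem] with δ hδ
      have hδ0 : (0 : ℝ) < δ := hδ.1
      have hδ2 : δ < 1 / 2 := hδ.2
      have hx1 : (a + 1 - δ) ∈ Icc a (a + 1) := ⟨by linarith, by linarith⟩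
      have hx2 : (a + δ) ∈ Icc a (a + 1) := ⟨by linarith, by linarith⟩
      have hs1 : s (a + 1 - δ) = Real.sin (Real.pi * δ) := by
        show Real.sin (Real.pi * (a + 1 - δ - a)) = _
        rw [show Real.pi * (a + 1 - δ - a) = Real.pi - Real.pi * δ by ring, Real.sin_pi_sub]
      have hs2 : s (a + δ) = Real.sin (Real.pi * δ) := by
        show Real.sin (Real.pi * (a + δ - a)) = _
        norm_num
      have hb1 := hFbound δ hδ (a + 1 - δ) hx1 (a + 1) ⟨by linarith, le_refl _⟩ h1 hs1
        (by rw [show a + 1 - δ - (a + 1) = -δ by ring, abs_neg, abs_of_pos hδ0])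
      have hb2 := hFbound δ hδ (a + δ) hx2 a ⟨le_refl _, by linarith⟩ h0 hs2
        (by rw [show a + δ - a = δ by ring, abs_of_pos hδ0])
      calc ‖F (a + 1 - δ) - F (a + δ)‖ ≤ |F (a + 1 - δ)| + |F (a + δ)| := by
            rw [Real.norm_eq_abs]; exact abs_sub _ _
      _ ≤ Real.pi * C ^ 2 * δ / 2 + Real.pi * C ^ 2 * δ / 2 := add_le_add hb1 hb2
      _ = Real.pi * C ^ 2 * δ := by ring
    · have h2 : Filter.Tendsto (fun δ : ℝ => Real.pi * C ^ 2 * δ) (nhds 0)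
          (nhds (Real.pi * C ^ 2 * 0)) := (continuous_const.mul continuous_id).tendsto 0
      simpa using h2.mono_left nhdsWithin_le_nhds
  have hfinal : (0 : ℝ) ≤ H (a + 1) - H a := by
    apply le_of_tendsto_of_tendsto tendF tendH
    filter_upwards [hmem] with δ hδ
    exact key δ hδ
  have hHa : H a = 0 := by
    rw [hH_def]
    simp
  have hInt : (0 : ℝ) ≤ ∫ x in a..(a + 1), h x := by
    rw [hH_def] at hfinal
    simpa [hHa] using hfinal
  have hle : a ≤ a + 1 := by linarith
  rw [intervalIntegral.integral_of_le hle] at hInt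
  have hi1 : IntegrableOn (fun x => (deriv f x) ^ 2) (Ioc a (a + 1)) :=
    (hdc.pow 2).integrableOn_Ioc
  have hi2 : IntegrableOn (fun x => Real.pi ^ 2 * f x ^ 2) (Ioc a (a + 1)) :=
    (continuous_const.mul (hfc.pow 2)).integrableOn_Ioc
  have hsplit : ∫ x in Ioc a (a + 1), h x
      = (∫ x in Ioc a (a + 1), (deriv f x) ^ 2)
        - Real.pi ^ 2 * ∫ x in Ioc a (a + 1), f x ^ 2 := by
    rw [hh_def]
    rw [MeasureTheory.integral_sub hi1 hi2, MeasureTheory.integral_const_mul]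
  rw [integral_Icc_eq_integral_Ioc, integral_Icc_eq_integral_Ioc]
  linarith [hInt, hsplit]

lemma poincare_cell (r₀ : ℝ) (f : ℝ × ℝ → ℝ) (hf : ContDiff ℝ (⊤ : ℕ∞) f)
    (hb : ∀ x : ℝ, f (x, r₀) = 0 ∧ f (x, r₀ + 1) = 0) :
    Real.pi ^ 2 * ∫ p in cell r₀, f p ^ 2 ≤ ∫ p in cell r₀, (pdy f p) ^ 2 := by
  have hfc := hf.continuous
  have hyc := (contDiff_pdy f hf).continuous
  rw [cell_fubini' r₀ (fun p => f p ^ 2) (hfc.pow 2),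
      cell_fubini' r₀ (fun p => (pdy f p) ^ 2) (hyc.pow 2)]
  rw [← MeasureTheory.integral_const_mul]
  have hI1 : IntegrableOn (fun p : ℝ × ℝ => f p ^ 2) (cell r₀) :=
    integrableOn_cell (hfc.pow 2)
  have hI2 : IntegrableOn (fun p : ℝ × ℝ => (pdy f p) ^ 2) (cell r₀) :=
    integrableOn_cell (hyc.pow 2)
  have hres : ∀ F : ℝ × ℝ → ℝ, IntegrableOn F (cell r₀) →
      Integrable (Function.uncurry fun x y => F (x, y))
        ((volume.restrict (Icc 0 (2 * Real.pi * r₀))).prod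
          (volume.restrict (Icc r₀ (r₀ + 1)))) := by
    intro F hF
    rw [Measure.prod_restrict]
    rw [cell, Measure.volume_eq_prod] at hF
    exact hF
  apply setIntegral_mono_on
  · have := (hres _ hI1).integral_prod_left
    exact (this.const_mul (Real.pi ^ 2))
  · exact (hres _ hI2).integral_prod_left
  · exact measurableSet_Icc
  · intro x _
    have hslice : ContDiff ℝ (⊤ : ℕ∞) (fun y => f (x, y)) :=
      hf.comp (contDiff_const.prodMk contDiff_id)
    have h1d := poincare1d (fun y => f (x, y)) hslice r₀ (hb x).1 (hb x).2
    exact h1d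

lemma adv_zero (r₀ : ℝ) (hr₀ : 0 < r₀) (v₁ v₂ f : ℝ × ℝ → ℝ)
    (h₁ : ContDiff ℝ (⊤ : ℕ∞) v₁) (h₂ : ContDiff ℝ (⊤ : ℕ∞) v₂) (hf : ContDiff ℝ (⊤ : ℕ∞) f)
    (hp₁ : Per r₀ v₁) (hp₂ : Per r₀ v₂) (hpf : Per r₀ f)
    (hdiv : ∀ p ∈ strip r₀, pdx v₁ p + pdy v₂ p = 0)
    (hb : ∀ x : ℝ, v₂ (x, r₀) = 0 ∧ v₂ (x, r₀ + 1) = 0) :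
    ∫ p in cell r₀, f p * adv v₁ v₂ f p = 0 := by
  have hd := hf.differentiable (by simp)
  have hJ := J_zero r₀ hr₀ v₁ v₂ (fun q => f q * f q) h₁ h₂ (hf.mul hf)
    hp₁ hp₂ (hpf.mul hpf) hdiv hb
  have key : ∀ p ∈ cell r₀, f p * adv v₁ v₂ f p
      = (1 / 2) * (v₁ p * pdx (fun q => f q * f q) p + v₂ p * pdy (fun q => f q * f q) p) := by
    intro p _
    rw [adv, pdx_mul f f hd hd p, pdy_mul f f hd hd p]
    ring
  rw [setIntegral_congr_fun (isCompact_cell r₀).measurableSet key,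
    MeasureTheory.integral_const_mul, hJ, mul_zero]

set_option maxHeartbeats 2000000 in
/-- The core dissipation inequality at a fixed time. -/
lemma core_ineq (r₀ Pr R δ₀' δ₁' : ℝ) (hr₀ : 0 < r₀) (hPr : 0 < Pr) (hR : 0 < R)
    (hRle : R ≤ Real.pi ^ 4) (hδ₀ : 0 ≤ δ₀') (hδ₁ : 0 ≤ δ₁')
    (v₁ v₂ θ P : ℝ × ℝ → ℝ) (w₁ w₂ wθ : ℝ × ℝ → ℝ)
    (h₁ : ContDiff ℝ (⊤ : ℕ∞) v₁) (h₂ : ContDiff ℝ (⊤ : ℕ∞) v₂) (hθ : ContDiff ℝ (⊤ : ℕ∞) θ)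
    (hP : ContDiff ℝ (⊤ : ℕ∞) P)
    (hp₁ : Per r₀ v₁) (hp₂ : Per r₀ v₂) (hpθ : Per r₀ θ) (hpP : Per r₀ P)
    (hdiv : ∀ p ∈ strip r₀, pdx v₁ p + pdy v₂ p = 0)
    (hbc : ∀ x : ℝ, v₂ (x, r₀) = 0 ∧ v₂ (x, r₀ + 1) = 0 ∧
      pdy v₁ (x, r₀) = 0 ∧ pdy v₁ (x, r₀ + 1) = 0 ∧ θ (x, r₀) = 0 ∧ θ (x, r₀ + 1) = 0)
    (he₁ : ∀ p ∈ strip r₀, w₁ p + adv v₁ v₂ v₁ p + v₁ p * v₂ p / r₀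
      = Pr * (lap v₁ p - δ₀' * v₁ p - pdx P p))
    (he₂ : ∀ p ∈ strip r₀, w₂ p + adv v₁ v₂ v₂ p - (v₁ p) ^ 2 / r₀
      = Pr * (lap v₂ p - δ₁' * v₂ p + R * θ p - pdy P p))
    (he₃ : ∀ p ∈ strip r₀, wθ p + adv v₁ v₂ θ p = lap θ p + v₂ p) :
    ∫ p in cell r₀, (v₁ p * w₁ p + v₂ p * w₂ p + Pr * R * (θ p * wθ p)) ≤ 0 := by
  have hb2 : ∀ x : ℝ, v₂ (x, r₀) = 0 ∧ v₂ (x, r₀ + 1) = 0 := fun x => ⟨(hbc x).1, (hbc x).2.1⟩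
  have hc₁ := h₁.continuous
  have hc₂ := h₂.continuous
  have hcθ := hθ.continuous
  have hadv : ∀ g : ℝ × ℝ → ℝ, ContDiff ℝ (⊤ : ℕ∞) g → Continuous (adv v₁ v₂ g) := by
    intro g hg
    exact (hc₁.mul (contDiff_pdx g hg).continuous).add (hc₂.mul (contDiff_pdy g hg).continuous)
  have hlap : ∀ g : ℝ × ℝ → ℝ, ContDiff ℝ (⊤ : ℕ∞) g → Continuous (lap g) := by
    intro g hg
    exact ((contDiff_pdx _ (contDiff_pdx g hg)).continuous).add
      ((contDiff_pdy _ (contDiff_pdy g hg)).continuous)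
  -- named pieces
  set M : ℝ × ℝ → ℝ := fun p =>
    Pr * (v₁ p * lap v₁ p) + Pr * (v₂ p * lap v₂ p) + Pr * R * (θ p * lap θ p)
      + (2 * Pr * R) * (v₂ p * θ p) with hM_def
  set Dl : ℝ × ℝ → ℝ := fun p =>
    (Pr * δ₀') * (v₁ p) ^ 2 + (Pr * δ₁') * (v₂ p) ^ 2 with hDl_def
  set Av : ℝ × ℝ → ℝ := fun p =>
    v₁ p * adv v₁ v₂ v₁ p + v₂ p * adv v₁ v₂ v₂ p
      + (Pr * R) * (θ p * adv v₁ v₂ θ p) with hAv_def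
  set Pq : ℝ × ℝ → ℝ := fun p =>
    Pr * (v₁ p * pdx P p + v₂ p * pdy P p) with hPq_def
  -- Step A: pointwise rewriting using the equations of motion
  have hkey : ∀ p ∈ cell r₀,
      v₁ p * w₁ p + v₂ p * w₂ p + Pr * R * (θ p * wθ p)
        = M p - Dl p - Av p - Pq p := by
    intro p hp
    have hps := cell_subset_strip r₀ hp
    have e₁ := he₁ p hps
    have e₂ := he₂ p hps
    have e₃ := he₃ p hps
    rw [hM_def, hDl_def, hAv_def, hPq_def]
    linear_combination v₁ p * e₁ + v₂ p * e₂ + (Pr * R * θ p) * e₃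
  rw [setIntegral_congr_fun (isCompact_cell r₀).measurableSet hkey]
  -- Step B: integrability of pieces
  have hIM : IntegrableOn M (cell r₀) := by
    rw [hM_def]
    exact integrableOn_cell ((((continuous_const.mul (hc₁.mul (hlap v₁ h₁))).add
      (continuous_const.mul (hc₂.mul (hlap v₂ h₂)))).add
      (continuous_const.mul (hcθ.mul (hlap θ hθ)))).add
      (continuous_const.mul (hc₂.mul hcθ)))
  have hID : IntegrableOn Dl (cell r₀) := by
    rw [hDl_def]
    exact integrableOn_cell ((continuous_const.mul (hc₁.pow 2)).add
      (continuous_const.mul (hc₂.pow 2)))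
  have hIA : IntegrableOn Av (cell r₀) := by
    rw [hAv_def]
    exact integrableOn_cell (((hc₁.mul (hadv v₁ h₁)).add (hc₂.mul (hadv v₂ h₂))).add
      (continuous_const.mul (hcθ.mul (hadv θ hθ))))
  have hIP : IntegrableOn Pq (cell r₀) := by
    rw [hPq_def]
    exact integrableOn_cell (continuous_const.mul ((hc₁.mul (contDiff_pdx P hP).continuous).add
      (hc₂.mul (contDiff_pdy P hP).continuous)))
  have hS1 : IntegrableOn (fun p => M p - Dl p) (cell r₀) := hIM.sub hID
  have hS2 : IntegrableOn (fun p => M p - Dl p - Av p) (cell r₀) := hS1.sub hIA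
  rw [MeasureTheory.integral_sub hS2 hIP, MeasureTheory.integral_sub hS1 hIA,
      MeasureTheory.integral_sub hIM hID]
  -- the advection integral vanishes
  have hA₁ := adv_zero r₀ hr₀ v₁ v₂ v₁ h₁ h₂ h₁ hp₁ hp₂ hp₁ hdiv hb2
  have hA₂ := adv_zero r₀ hr₀ v₁ v₂ v₂ h₁ h₂ h₂ hp₁ hp₂ hp₂ hdiv hb2
  have hAθ := adv_zero r₀ hr₀ v₁ v₂ θ h₁ h₂ hθ hp₁ hp₂ hpθ hdiv hb2
  have hAdv : ∫ p in cell r₀, Av p = 0 := by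
    rw [hAv_def]
    have i1 : IntegrableOn (fun p => v₁ p * adv v₁ v₂ v₁ p) (cell r₀) :=
      integrableOn_cell (hc₁.mul (hadv v₁ h₁))
    have i2 : IntegrableOn (fun p => v₂ p * adv v₁ v₂ v₂ p) (cell r₀) :=
      integrableOn_cell (hc₂.mul (hadv v₂ h₂))
    have i3 : IntegrableOn (fun p => (Pr * R) * (θ p * adv v₁ v₂ θ p)) (cell r₀) :=
      integrableOn_cell (continuous_const.mul (hcθ.mul (hadv θ hθ)))
    have i12 : IntegrableOn (fun p => v₁ p * adv v₁ v₂ v₁ p + v₂ p * adv v₁ v₂ v₂ p)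
        (cell r₀) := i1.add i2
    rw [MeasureTheory.integral_add i12 i3, MeasureTheory.integral_add i1 i2,
      MeasureTheory.integral_const_mul, hA₁, hA₂, hAθ]
    ring
  -- the pressure integral vanishes
  have hPress : ∫ p in cell r₀, Pq p = 0 := by
    rw [hPq_def]
    rw [MeasureTheory.integral_const_mul,
      J_zero r₀ hr₀ v₁ v₂ P h₁ h₂ hP hp₁ hp₂ hpP hdiv hb2, mul_zero]
  -- the Laplacian integrals
  have hL₁ := integral_mul_lap r₀ hr₀ v₁ h₁ hp₁ (fun x => by
    rw [(hbc x).2.2.1, (hbc x).2.2.2.1]; constructor <;> ring)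
  have hL₂ := integral_mul_lap r₀ hr₀ v₂ h₂ hp₂ (fun x => by
    rw [(hbc x).1, (hbc x).2.1]; constructor <;> ring)
  have hLθ := integral_mul_lap r₀ hr₀ θ hθ hpθ (fun x => by
    rw [(hbc x).2.2.2.2.1, (hbc x).2.2.2.2.2]; constructor <;> ring)
  -- split the main integral
  have hIL : ∀ g : ℝ × ℝ → ℝ, ContDiff ℝ (⊤ : ℕ∞) g →
      IntegrableOn (fun p => g p * lap g p) (cell r₀) := by
    intro g hg
    exact integrableOn_cell (hg.continuous.mul (hlap g hg))
  have hMsplit : ∫ p in cell r₀, M p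
      = Pr * (∫ p in cell r₀, v₁ p * lap v₁ p) + Pr * (∫ p in cell r₀, v₂ p * lap v₂ p)
        + Pr * R * (∫ p in cell r₀, θ p * lap θ p)
        + (2 * Pr * R) * ∫ p in cell r₀, (v₂ p * θ p) := by
    rw [hM_def]
    have j1 : IntegrableOn (fun p => Pr * (v₁ p * lap v₁ p)) (cell r₀) :=
      integrableOn_cell (continuous_const.mul (hc₁.mul (hlap v₁ h₁)))
    have j2 : IntegrableOn (fun p => Pr * (v₂ p * lap v₂ p)) (cell r₀) :=
      integrableOn_cell (continuous_const.mul (hc₂.mul (hlap v₂ h₂)))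
    have j3 : IntegrableOn (fun p => Pr * R * (θ p * lap θ p)) (cell r₀) :=
      integrableOn_cell (continuous_const.mul (hcθ.mul (hlap θ hθ)))
    have j4 : IntegrableOn (fun p => (2 * Pr * R) * (v₂ p * θ p)) (cell r₀) :=
      integrableOn_cell (continuous_const.mul (hc₂.mul hcθ))
    have j12 : IntegrableOn (fun p => Pr * (v₁ p * lap v₁ p) + Pr * (v₂ p * lap v₂ p))
        (cell r₀) := j1.add j2
    have j123 : IntegrableOn (fun p => Pr * (v₁ p * lap v₁ p) + Pr * (v₂ p * lap v₂ p)
        + Pr * R * (θ p * lap θ p)) (cell r₀) := j12.add j3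
    rw [MeasureTheory.integral_add j123 j4, MeasureTheory.integral_add j12 j3,
      MeasureTheory.integral_add j1 j2, MeasureTheory.integral_const_mul,
      MeasureTheory.integral_const_mul, MeasureTheory.integral_const_mul,
      MeasureTheory.integral_const_mul]
  have hDsplit : ∫ p in cell r₀, Dl p
      = (Pr * δ₀') * (∫ p in cell r₀, (v₁ p) ^ 2)
        + (Pr * δ₁') * ∫ p in cell r₀, (v₂ p) ^ 2 := by
    rw [hDl_def]
    have j1 : IntegrableOn (fun p => (Pr * δ₀') * (v₁ p) ^ 2) (cell r₀) :=
      integrableOn_cell (continuous_const.mul (hc₁.pow 2))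
    have j2 : IntegrableOn (fun p => (Pr * δ₁') * (v₂ p) ^ 2) (cell r₀) :=
      integrableOn_cell (continuous_const.mul (hc₂.pow 2))
    rw [MeasureTheory.integral_add j1 j2, MeasureTheory.integral_const_mul,
      MeasureTheory.integral_const_mul]
  rw [hAdv, hPress, hMsplit, hDsplit, hL₁, hL₂, hLθ]
  -- abbreviations for the remaining integrals
  have pipos := Real.pi_pos
  have nn : ∀ g : ℝ × ℝ → ℝ, 0 ≤ ∫ p in cell r₀, g p ^ 2 := by
    intro g
    apply setIntegral_nonneg (isCompact_cell r₀).measurableSet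
    intro p _
    exact sq_nonneg _
  have split2 : ∀ g : ℝ × ℝ → ℝ, ∀ hg : ContDiff ℝ (⊤ : ℕ∞) g,
      ∫ p in cell r₀, ((pdx g p) ^ 2 + (pdy g p) ^ 2)
        = (∫ p in cell r₀, (pdx g p) ^ 2) + ∫ p in cell r₀, (pdy g p) ^ 2 := by
    intro g hg
    exact MeasureTheory.integral_add
      (integrableOn_cell ((contDiff_pdx g hg).continuous.pow 2))
      (integrableOn_cell ((contDiff_pdy g hg).continuous.pow 2))
  rw [split2 v₁ h₁, split2 v₂ h₂, split2 θ hθ]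
  set X1 := ∫ p in cell r₀, (pdx v₁ p) ^ 2
  set Y1 := ∫ p in cell r₀, (pdy v₁ p) ^ 2
  set X2 := ∫ p in cell r₀, (pdx v₂ p) ^ 2
  set Y2 := ∫ p in cell r₀, (pdy v₂ p) ^ 2
  set Xθ := ∫ p in cell r₀, (pdx θ p) ^ 2
  set Yθ := ∫ p in cell r₀, (pdy θ p) ^ 2
  set N1 := ∫ p in cell r₀, (v₁ p) ^ 2
  set N2 := ∫ p in cell r₀, (v₂ p) ^ 2
  set Nθ := ∫ p in cell r₀, (θ p) ^ 2
  set Cr := ∫ p in cell r₀, (v₂ p * θ p)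
  -- Poincaré inequalities
  have hPoin₂ : Real.pi ^ 2 * N2 ≤ Y2 := poincare_cell r₀ v₂ h₂ hb2
  have hPoinθ : Real.pi ^ 2 * Nθ ≤ Yθ :=
    poincare_cell r₀ θ hθ (fun x => ⟨(hbc x).2.2.2.2.1, (hbc x).2.2.2.2.2⟩)
  -- cross term estimate
  have hCross : Cr ≤ (1 / (2 * Real.pi ^ 2)) * N2 + (Real.pi ^ 2 / 2) * Nθ := by
    have hmono : Cr ≤ ∫ p in cell r₀,
        ((1 / (2 * Real.pi ^ 2)) * (v₂ p) ^ 2 + (Real.pi ^ 2 / 2) * (θ p) ^ 2) := by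
      apply setIntegral_mono_on (integrableOn_cell (hc₂.mul hcθ))
        (integrableOn_cell ((continuous_const.mul (hc₂.pow 2)).add
          (continuous_const.mul (hcθ.pow 2))))
        (isCompact_cell r₀).measurableSet
      intro p _
      show v₂ p * θ p ≤ (1 / (2 * Real.pi ^ 2)) * (v₂ p) ^ 2 + (Real.pi ^ 2 / 2) * (θ p) ^ 2
      have h2pi : (0 : ℝ) < 2 * Real.pi ^ 2 := by positivity
      have key0 : 2 * Real.pi ^ 2 * (v₂ p * θ p) ≤ (v₂ p) ^ 2 + Real.pi ^ 4 * (θ p) ^ 2 := by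
        nlinarith [sq_nonneg (v₂ p - Real.pi ^ 2 * θ p)]
      rw [show (1 / (2 * Real.pi ^ 2)) * (v₂ p) ^ 2 + (Real.pi ^ 2 / 2) * (θ p) ^ 2
          = ((v₂ p) ^ 2 + Real.pi ^ 4 * (θ p) ^ 2) / (2 * Real.pi ^ 2) from by
        field_simp]
      rw [le_div_iff₀ h2pi]
      nlinarith [key0]
    have j1 : IntegrableOn (fun p => (1 / (2 * Real.pi ^ 2)) * (v₂ p) ^ 2) (cell r₀) :=
      integrableOn_cell (continuous_const.mul (hc₂.pow 2))
    have j2 : IntegrableOn (fun p => (Real.pi ^ 2 / 2) * (θ p) ^ 2) (cell r₀) :=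
      integrableOn_cell (continuous_const.mul (hcθ.pow 2))
    rw [MeasureTheory.integral_add j1 j2, MeasureTheory.integral_const_mul,
      MeasureTheory.integral_const_mul] at hmono
    exact hmono
  -- assemble
  have hpi4 : (0 : ℝ) < Real.pi ^ 4 := by positivity
  have hN2 : N2 ≤ Y2 / Real.pi ^ 2 := by
    rw [le_div_iff₀ (by positivity)]
    linarith [hPoin₂]
  have hNθ : Real.pi ^ 2 * Nθ ≤ Yθ := hPoinθ
  have hCr2 : (2 * Pr * R) * Cr
      ≤ (Pr * R) * ((1 / Real.pi ^ 2) * N2) + (Pr * R) * (Real.pi ^ 2 * Nθ) := by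
    have := mul_le_mul_of_nonneg_left hCross (by positivity : (0:ℝ) ≤ 2 * Pr * R)
    calc (2 * Pr * R) * Cr
        ≤ (2 * Pr * R) * ((1 / (2 * Real.pi ^ 2)) * N2 + (Real.pi ^ 2 / 2) * Nθ) := this
    _ = (Pr * R) * ((1 / Real.pi ^ 2) * N2) + (Pr * R) * (Real.pi ^ 2 * Nθ) := by
        field_simp
  have hstep1 : (Pr * R) * ((1 / Real.pi ^ 2) * N2) ≤ Pr * Y2 := by
    have k1 : (1 / Real.pi ^ 2) * N2 ≤ (1 / Real.pi ^ 2) * (Y2 / Real.pi ^ 2) :=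
      mul_le_mul_of_nonneg_left hN2 (by positivity)
    have k2 : (Pr * R) * ((1 / Real.pi ^ 2) * N2) ≤ (Pr * R) * ((1 / Real.pi ^ 2) * (Y2 / Real.pi ^ 2)) :=
      mul_le_mul_of_nonneg_left k1 (by positivity)
    have k3 : (Pr * R) * ((1 / Real.pi ^ 2) * (Y2 / Real.pi ^ 2)) = (Pr * Y2) * (R / Real.pi ^ 4) := by
      field_simp
    have k4 : (Pr * Y2) * (R / Real.pi ^ 4) ≤ (Pr * Y2) * 1 := by
      apply mul_le_mul_of_nonneg_left _ (mul_nonneg hPr.le (nn (pdy v₂)))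
      rw [div_le_one hpi4]
      exact hRle
    calc (Pr * R) * ((1 / Real.pi ^ 2) * N2) ≤ (Pr * Y2) * (R / Real.pi ^ 4) := by
          rw [← k3]; exact k2
    _ ≤ (Pr * Y2) * 1 := k4
    _ = Pr * Y2 := by ring
  have hstep2 : (Pr * R) * (Real.pi ^ 2 * Nθ) ≤ (Pr * R) * Yθ :=
    mul_le_mul_of_nonneg_left hNθ (by positivity)
  have hfin : (2 * Pr * R) * Cr ≤ Pr * Y2 + (Pr * R) * Yθ := by linarith
  have g1 : 0 ≤ Pr * X1 := mul_nonneg hPr.le (nn _)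
  have g2 : 0 ≤ Pr * Y1 := mul_nonneg hPr.le (nn _)
  have g3 : 0 ≤ Pr * X2 := mul_nonneg hPr.le (nn _)
  have g4 : 0 ≤ Pr * R * Xθ := mul_nonneg (mul_nonneg hPr.le hR.le) (nn _)
  have g5 : 0 ≤ Pr * δ₀' * N1 := mul_nonneg (mul_nonneg hPr.le hδ₀) (nn _)
  have g6 : 0 ≤ Pr * δ₁' * N2 := mul_nonneg (mul_nonneg hPr.le hδ₁) (nn _)
  nlinarith [hfin, g1, g2, g3, g4, g5, g6]

lemma contDiff_fderiv_apply3 (U : (ℝ × ℝ) × ℝ → ℝ) (hU : ContDiff ℝ (⊤ : ℕ∞) U)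
    (v : (ℝ × ℝ) × ℝ) : ContDiff ℝ (⊤ : ℕ∞) (fun q => fderiv ℝ U q v) :=
  (hU.fderiv_right (by simp)).clm_apply contDiff_const

lemma hasDerivAt_slice_t (U : (ℝ × ℝ) × ℝ → ℝ) (hU : Differentiable ℝ U)
    (p : ℝ × ℝ) (t : ℝ) :
    HasDerivAt (fun s => U (p, s)) (fderiv ℝ U (p, t) ((0 : ℝ × ℝ), (1 : ℝ))) t := by
  have h1 : HasDerivAt (fun s : ℝ => (p, s)) ((0 : ℝ × ℝ), (1 : ℝ)) t := by
    simpa using ((hasDerivAt_const t p).prodMk (hasDerivAt_id t))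
  exact (hU (p, t)).hasFDerivAt.comp_hasDerivAt t h1

lemma contDiff_space_slice (U : (ℝ × ℝ) × ℝ → ℝ) (hU : ContDiff ℝ (⊤ : ℕ∞) U) (t : ℝ) :
    ContDiff ℝ (⊤ : ℕ∞) (fun x : ℝ × ℝ => U (x, t)) :=
  hU.comp (contDiff_id.prodMk contDiff_const)

set_option maxHeartbeats 2000000 in
/-- for Rayleigh numbers `0 < R ≤ π⁴` the energy
`E(t) = ½∫(u₁² + u₂² + Pr·R·T²)` of a solution of the equatorial Boussinesq system is
nonincreasing on `[0,τ]` (energy stability of the zero state below criticality). -/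
theorem energy_nonincreasing
    (r₀ Pr R δ₀' δ₁' τ : ℝ) (hr₀ : 0 < r₀) (hPr : 0 < Pr)
    (hR : 0 < R) (hRle : R ≤ Real.pi ^ 4) (hδ₀ : 0 ≤ δ₀') (hδ₁ : 0 ≤ δ₁') (hτ : 0 < τ)
    (u₁ u₂ T pr : ℝ × ℝ → ℝ → ℝ)
    (hu₁ : ContDiff ℝ (⊤ : ℕ∞) (fun q : (ℝ × ℝ) × ℝ => u₁ q.1 q.2))
    (hu₂ : ContDiff ℝ (⊤ : ℕ∞) (fun q : (ℝ × ℝ) × ℝ => u₂ q.1 q.2))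
    (hT : ContDiff ℝ (⊤ : ℕ∞) (fun q : (ℝ × ℝ) × ℝ => T q.1 q.2))
    (hp : ContDiff ℝ (⊤ : ℕ∞) (fun q : (ℝ × ℝ) × ℝ => pr q.1 q.2))
    (hperu₁ : ∀ t, Per r₀ (fun x => u₁ x t)) (hperu₂ : ∀ t, Per r₀ (fun x => u₂ x t))
    (hperT : ∀ t, Per r₀ (fun x => T x t)) (hperp : ∀ t, Per r₀ (fun x => pr x t))
    (hdiv : ∀ t ∈ Set.Icc (0 : ℝ) τ, ∀ p ∈ strip r₀,
      pdx (fun x => u₁ x t) p + pdy (fun x => u₂ x t) p = 0)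
    (hbc : ∀ x₁ : ℝ, ∀ t ∈ Set.Icc (0 : ℝ) τ,
      u₂ (x₁, r₀) t = 0 ∧ u₂ (x₁, r₀ + 1) t = 0 ∧
      pdy (fun x => u₁ x t) (x₁, r₀) = 0 ∧ pdy (fun x => u₁ x t) (x₁, r₀ + 1) = 0 ∧
      T (x₁, r₀) t = 0 ∧ T (x₁, r₀ + 1) t = 0)
    (heq₁ : ∀ t ∈ Set.Icc (0 : ℝ) τ, ∀ p ∈ strip r₀,
      deriv (u₁ p) t + adv (fun x => u₁ x t) (fun x => u₂ x t) (fun x => u₁ x t) p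
          + u₁ p t * u₂ p t / r₀
        = Pr * (lap (fun x => u₁ x t) p - δ₀' * u₁ p t - pdx (fun x => pr x t) p))
    (heq₂ : ∀ t ∈ Set.Icc (0 : ℝ) τ, ∀ p ∈ strip r₀,
      deriv (u₂ p) t + adv (fun x => u₁ x t) (fun x => u₂ x t) (fun x => u₂ x t) p
          - (u₁ p t) ^ 2 / r₀
        = Pr * (lap (fun x => u₂ x t) p - δ₁' * u₂ p t + R * T p t
            - pdy (fun x => pr x t) p))
    (heq₃ : ∀ t ∈ Set.Icc (0 : ℝ) τ, ∀ p ∈ strip r₀,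
      deriv (T p) t + adv (fun x => u₁ x t) (fun x => u₂ x t) (fun x => T x t) p
        = lap (fun x => T x t) p + u₂ p t) :
    AntitoneOn
      (fun t => (1 / 2) * ∫ p in cell r₀,
        ((u₁ p t) ^ 2 + (u₂ p t) ^ 2 + Pr * R * (T p t) ^ 2))
      (Set.Icc 0 τ) := by
  -- time-derivative functions
  set W₁ : (ℝ × ℝ) × ℝ → ℝ :=
    fun z => fderiv ℝ (fun q : (ℝ × ℝ) × ℝ => u₁ q.1 q.2) z ((0 : ℝ × ℝ), (1 : ℝ)) with hW₁_def
  set W₂ : (ℝ × ℝ) × ℝ → ℝ :=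
    fun z => fderiv ℝ (fun q : (ℝ × ℝ) × ℝ => u₂ q.1 q.2) z ((0 : ℝ × ℝ), (1 : ℝ)) with hW₂_def
  set WT : (ℝ × ℝ) × ℝ → ℝ :=
    fun z => fderiv ℝ (fun q : (ℝ × ℝ) × ℝ => T q.1 q.2) z ((0 : ℝ × ℝ), (1 : ℝ)) with hWT_def
  have hW₁c : ContDiff ℝ (⊤ : ℕ∞) W₁ := contDiff_fderiv_apply3 _ hu₁ _
  have hW₂c : ContDiff ℝ (⊤ : ℕ∞) W₂ := contDiff_fderiv_apply3 _ hu₂ _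
  have hWTc : ContDiff ℝ (⊤ : ℕ∞) WT := contDiff_fderiv_apply3 _ hT _
  have hd₁ : ∀ (p : ℝ × ℝ) (r : ℝ), HasDerivAt (u₁ p) (W₁ (p, r)) r :=
    fun p r => hasDerivAt_slice_t _ (hu₁.differentiable (by simp)) p r
  have hd₂ : ∀ (p : ℝ × ℝ) (r : ℝ), HasDerivAt (u₂ p) (W₂ (p, r)) r :=
    fun p r => hasDerivAt_slice_t _ (hu₂.differentiable (by simp)) p r
  have hdT : ∀ (p : ℝ × ℝ) (r : ℝ), HasDerivAt (T p) (WT (p, r)) r :=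
    fun p r => hasDerivAt_slice_t _ (hT.differentiable (by simp)) p r
  -- smooth spatial slices
  have hs₁ : ∀ r : ℝ, ContDiff ℝ (⊤ : ℕ∞) (fun x : ℝ × ℝ => u₁ x r) :=
    fun r => contDiff_space_slice _ hu₁ r
  have hs₂ : ∀ r : ℝ, ContDiff ℝ (⊤ : ℕ∞) (fun x : ℝ × ℝ => u₂ x r) :=
    fun r => contDiff_space_slice _ hu₂ r
  have hsT : ∀ r : ℝ, ContDiff ℝ (⊤ : ℕ∞) (fun x : ℝ × ℝ => T x r) :=
    fun r => contDiff_space_slice _ hT r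
  have hsp : ∀ r : ℝ, ContDiff ℝ (⊤ : ℕ∞) (fun x : ℝ × ℝ => pr x r) :=
    fun r => contDiff_space_slice _ hp r
  -- the time derivative of the energy density
  set qd : ℝ × ℝ → ℝ → ℝ := fun p r =>
    2 * (u₁ p r * W₁ (p, r) + u₂ p r * W₂ (p, r) + Pr * R * (T p r * WT (p, r))) with hqd_def
  have hqdc : Continuous (fun z : (ℝ × ℝ) × ℝ => qd z.1 z.2) := by
    rw [hqd_def]
    apply continuous_const.mul
    exact ((hu₁.continuous.mul hW₁c.continuous).add
      (hu₂.continuous.mul hW₂c.continuous)).add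
      (continuous_const.mul (hT.continuous.mul hWTc.continuous))
  have hq : ∀ (p : ℝ × ℝ) (r : ℝ),
      HasDerivAt (fun r => (u₁ p r) ^ 2 + (u₂ p r) ^ 2 + Pr * R * (T p r) ^ 2) (qd p r) r := by
    intro p r
    have h := (((hd₁ p r).pow 2).add ((hd₂ p r).pow 2)).add
      (((hdT p r).pow 2).const_mul (Pr * R))
    refine h.congr_deriv ?_
    rw [hqd_def]
    push_cast
    ring
  -- the core estimate at each time
  have hcore : ∀ r ∈ Icc (0 : ℝ) τ, (∫ p in cell r₀, qd p r) ≤ 0 := by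
    intro r hr
    have hbcr := fun x => hbc x r hr
    have he₁ : ∀ p ∈ strip r₀,
        (fun p => W₁ (p, r)) p + adv (fun x => u₁ x r) (fun x => u₂ x r) (fun x => u₁ x r) p
          + (fun x => u₁ x r) p * (fun x => u₂ x r) p / r₀
        = Pr * (lap (fun x => u₁ x r) p - δ₀' * (fun x => u₁ x r) p
            - pdx (fun x => pr x r) p) := by
      intro p hps
      have := heq₁ r hr p hps
      rwa [(hd₁ p r).deriv] at this
    have he₂ : ∀ p ∈ strip r₀,
        (fun p => W₂ (p, r)) p + adv (fun x => u₁ x r) (fun x => u₂ x r) (fun x => u₂ x r) p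
          - ((fun x => u₁ x r) p) ^ 2 / r₀
        = Pr * (lap (fun x => u₂ x r) p - δ₁' * (fun x => u₂ x r) p + R * (fun x => T x r) p
            - pdy (fun x => pr x r) p) := by
      intro p hps
      have := heq₂ r hr p hps
      rwa [(hd₂ p r).deriv] at this
    have he₃ : ∀ p ∈ strip r₀,
        (fun p => WT (p, r)) p + adv (fun x => u₁ x r) (fun x => u₂ x r) (fun x => T x r) p
        = lap (fun x => T x r) p + (fun x => u₂ x r) p := by
      intro p hps
      have := heq₃ r hr p hps
      rwa [(hdT p r).deriv] at this
    have hC := core_ineq r₀ Pr R δ₀' δ₁' hr₀ hPr hR hRle hδ₀ hδ₁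
      (fun x => u₁ x r) (fun x => u₂ x r) (fun x => T x r) (fun x => pr x r)
      (fun p => W₁ (p, r)) (fun p => W₂ (p, r)) (fun p => WT (p, r))
      (hs₁ r) (hs₂ r) (hsT r) (hsp r)
      (hperu₁ r) (hperu₂ r) (hperT r) (hperp r)
      (hdiv r hr)
      (fun x => ⟨(hbcr x).1, (hbcr x).2.1, (hbcr x).2.2.1, (hbcr x).2.2.2.1,
        (hbcr x).2.2.2.2.1, (hbcr x).2.2.2.2.2⟩)
      he₁ he₂ he₃
    have : ∫ p in cell r₀, qd p r
        = 2 * ∫ p in cell r₀, (u₁ p r * W₁ (p, r) + u₂ p r * W₂ (p, r)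
            + Pr * R * (T p r * WT (p, r))) := by
      rw [hqd_def]
      exact MeasureTheory.integral_const_mul 2 _
    rw [this]
    linarith [hC]
  -- monotonicity via the fundamental theorem of calculus and Fubini
  intro a ha b hb hab
  have hqint : ∀ r : ℝ, IntegrableOn
      (fun p => (u₁ p r) ^ 2 + (u₂ p r) ^ 2 + Pr * R * (T p r) ^ 2) (cell r₀) := by
    intro r
    exact integrableOn_cell ((((hs₁ r).continuous.pow 2).add ((hs₂ r).continuous.pow 2)).add
      (continuous_const.mul ((hsT r).continuous.pow 2)))
  have step1 : (∫ p in cell r₀, ((u₁ p b) ^ 2 + (u₂ p b) ^ 2 + Pr * R * (T p b) ^ 2))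
      - (∫ p in cell r₀, ((u₁ p a) ^ 2 + (u₂ p a) ^ 2 + Pr * R * (T p a) ^ 2))
      = ∫ p in cell r₀, (((u₁ p b) ^ 2 + (u₂ p b) ^ 2 + Pr * R * (T p b) ^ 2)
          - ((u₁ p a) ^ 2 + (u₂ p a) ^ 2 + Pr * R * (T p a) ^ 2)) :=
    (MeasureTheory.integral_sub (hqint b) (hqint a)).symm
  have step2 : ∀ p : ℝ × ℝ,
      ((u₁ p b) ^ 2 + (u₂ p b) ^ 2 + Pr * R * (T p b) ^ 2)
        - ((u₁ p a) ^ 2 + (u₂ p a) ^ 2 + Pr * R * (T p a) ^ 2)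
      = ∫ r in Icc a b, qd p r := by
    intro p
    have hftc : ∫ r in a..b, qd p r
        = ((u₁ p b) ^ 2 + (u₂ p b) ^ 2 + Pr * R * (T p b) ^ 2)
          - ((u₁ p a) ^ 2 + (u₂ p a) ^ 2 + Pr * R * (T p a) ^ 2) := by
      apply intervalIntegral.integral_eq_sub_of_hasDerivAt
        (f := fun r => (u₁ p r) ^ 2 + (u₂ p r) ^ 2 + Pr * R * (T p r) ^ 2)
      · intro r _
        exact hq p r
      · exact (hqdc.comp (continuous_const.prodMk continuous_id)).intervalIntegrable _ _
    rw [← hftc, intervalIntegral.integral_of_le hab, integral_Icc_eq_integral_Ioc]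
  have hIcc : Icc a b ⊆ Icc (0 : ℝ) τ := by
    intro r hr
    exact ⟨le_trans ha.1 hr.1, le_trans hr.2 hb.2⟩
  -- Fubini
  have step3 : ∫ p in cell r₀, (∫ r in Icc a b, qd p r)
      = ∫ r in Icc a b, ∫ p in cell r₀, qd p r := by
    have hint : Integrable (Function.uncurry qd)
        ((volume.restrict (cell r₀)).prod (volume.restrict (Icc a b))) := by
      rw [Measure.prod_restrict]
      have : IntegrableOn (fun z : (ℝ × ℝ) × ℝ => qd z.1 z.2) (cell r₀ ×ˢ Icc a b)
          (volume.prod volume) := by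
        rw [← Measure.volume_eq_prod]
        exact hqdc.continuousOn.integrableOn_compact ((isCompact_cell r₀).prod isCompact_Icc)
      exact this
    exact integral_integral_swap hint
  have step4 : ∫ r in Icc a b, (∫ p in cell r₀, qd p r) ≤ 0 := by
    apply setIntegral_nonpos measurableSet_Icc
    intro r hr
    exact hcore r (hIcc hr)
  -- conclude
  have key : (∫ p in cell r₀, ((u₁ p b) ^ 2 + (u₂ p b) ^ 2 + Pr * R * (T p b) ^ 2))
      - (∫ p in cell r₀, ((u₁ p a) ^ 2 + (u₂ p a) ^ 2 + Pr * R * (T p a) ^ 2)) ≤ 0 := by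
    rw [step1]
    have : ∫ p in cell r₀, (((u₁ p b) ^ 2 + (u₂ p b) ^ 2 + Pr * R * (T p b) ^ 2)
        - ((u₁ p a) ^ 2 + (u₂ p a) ^ 2 + Pr * R * (T p a) ^ 2))
        = ∫ p in cell r₀, (∫ r in Icc a b, qd p r) := by
      apply setIntegral_congr_fun (isCompact_cell r₀).measurableSet
      intro p _
      exact step2 p
    rw [this, step3]
    exact step4
  simp only
  linarith [key]
end
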